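/- arXiv:math/9908012 — 9 statements merged into one kernel-verified Lean document; each statement's English description precedes it below -/
import Mathlib

section
/- (Weyl's inequality) For n×n Hermitian matrices A, B and C = A + B, whenever i + j − 1 ≤ n one has γ_{i+j−1} ≤ α_i + β_j, where α, β, γ are the eigenvalues of A, B, C listed in decreasing order. -/
/-!
Fix orthonormal eigenbases of `A`, `B`, `C` ordered like `α`, `β`, `γ`. On the span of the
eigenvectors of `A` for `α_i, …, α_{n-1}`, of dimension `n - i`, the Rayleigh quotient of `A` is at
most `α_i`; likewise for `B` and `β_j`; on the span of the eigenvectors of `C` for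
`γ_0, …, γ_{i+j}`, of dimension `i + j + 1`, the Rayleigh quotient of `C` is at least `γ_{i+j}`.
The dimensions add up to `2n + 1`, so the three subspaces share a vector `x ≠ 0`, and
`γ_{i+j} ‖x‖² ≤ ⟪Cx, x⟫ = ⟪Ax, x⟫ + ⟪Bx, x⟫ ≤ (α_i + β_j) ‖x‖²`.
-/

open Matrix BigOperators

/-- `α` is the list of eigenvalues of the Hermitian matrix `A`
in weakly decreasing order (with multiplicity). -/
def IsEigSeq {n : ℕ} (A : Matrix (Fin n) (Fin n) ℂ) (hA : A.IsHermitian)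
    (α : Fin n → ℝ) : Prop :=
  Antitone α ∧ ∃ σ : Equiv.Perm (Fin n), ∀ i, α i = hA.eigenvalues (σ i)

open Module RCLike Submodule
open scoped InnerProductSpace

theorem Submodule.finrank_add_finrank_le_finrank_inf_add {K V : Type*} [DivisionRing K]
    [AddCommGroup V] [Module K V] [FiniteDimensional K V] (p q : Submodule K V) :
    finrank K p + finrank K q ≤ finrank K ↥(p ⊓ q) + finrank K V := by
  have := finrank_sup_add_finrank_inf_eq p q
  have := (p ⊔ q).finrank_le
  omega

theorem Submodule.exists_ne_zero_mem_of_finrank_add_finrank_add_finrank_gt {K V : Type*}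
    [DivisionRing K] [AddCommGroup V] [Module K V] [FiniteDimensional K V]
    (p q r : Submodule K V) (h : 2 * finrank K V < finrank K p + finrank K q + finrank K r) :
    ∃ x ≠ 0, x ∈ p ∧ x ∈ q ∧ x ∈ r := by
  have hpq := finrank_add_finrank_le_finrank_inf_add p q
  have hpqr := finrank_add_finrank_le_finrank_inf_add (p ⊓ q) r
  obtain ⟨⟨x, hx⟩, hx0⟩ :=
    finrank_pos_iff_exists_ne_zero.mp (show 0 < finrank K ↥(p ⊓ q ⊓ r) by omega)
  exact ⟨x, by simpa using hx0, hx.1.1, hx.1.2, hx.2⟩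

section Rayleigh

variable {𝕜 E ι : Type*} [RCLike 𝕜] [NormedAddCommGroup E] [InnerProductSpace 𝕜 E] [Fintype ι]

theorem OrthonormalBasis.inner_eq_zero_of_mem_span_image (b : OrthonormalBasis ι 𝕜 E)
    {S : Set ι} {x : E} (hx : x ∈ span 𝕜 (b '' S)) {m : ι} (hm : m ∉ S) : ⟪b m, x⟫_𝕜 = 0 := by
  have hle : span 𝕜 (b '' S) ≤ (𝕜 ∙ b m)ᗮ := by
    rw [span_le]
    rintro _ ⟨k, hk, rfl⟩
    exact mem_orthogonal_singleton_iff_inner_right.mpr (b.orthonormal.2 fun h => hm (h ▸ hk))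
  exact mem_orthogonal_singleton_iff_inner_right.mp (hle hx)

theorem OrthonormalBasis.finrank_span_image (b : OrthonormalBasis ι 𝕜 E) (S : Finset ι) :
    finrank 𝕜 (span 𝕜 (b '' S)) = S.card := by
  rw [Set.image_eq_range, finrank_span_eq_card (b := fun k : (S : Set ι) => b k)
    (b.orthonormal.linearIndependent.comp _ Subtype.val_injective)]
  simp

variable {T : E →ₗ[𝕜] E} {b : OrthonormalBasis ι 𝕜 E} {μ : ι → ℝ}

theorem LinearMap.IsSymmetric.re_inner_apply_self_eq_sum (hT : T.IsSymmetric)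
    (hb : ∀ k, T (b k) = (μ k : 𝕜) • b k) (x : E) :
    re ⟪T x, x⟫_𝕜 = ∑ k, μ k * ‖⟪b k, x⟫_𝕜‖ ^ 2 := by
  rw [← b.sum_inner_mul_inner, map_sum]
  refine Finset.sum_congr rfl fun k _ => ?_
  rw [hT, hb, inner_smul_right, mul_assoc, re_ofReal_mul, inner_mul_symm_re_eq_norm, norm_mul,
    ← inner_conj_symm x, norm_conj, sq]

theorem LinearMap.IsSymmetric.re_inner_apply_self_le_of_mem_span (hT : T.IsSymmetric)
    (hb : ∀ k, T (b k) = (μ k : 𝕜) • b k) {S : Set ι} {t : ℝ}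
    (ht : ∀ k ∈ S, μ k ≤ t) {x : E} (hx : x ∈ span 𝕜 (b '' S)) :
    re ⟪T x, x⟫_𝕜 ≤ t * ‖x‖ ^ 2 := by
  rw [hT.re_inner_apply_self_eq_sum hb, ← b.sum_sq_norm_inner_right, Finset.mul_sum]
  refine Finset.sum_le_sum fun k _ => ?_
  by_cases hk : k ∈ S
  · exact mul_le_mul_of_nonneg_right (ht k hk) (by positivity)
  · simp [b.inner_eq_zero_of_mem_span_image hx hk]

theorem LinearMap.IsSymmetric.le_re_inner_apply_self_of_mem_span (hT : T.IsSymmetric)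
    (hb : ∀ k, T (b k) = (μ k : 𝕜) • b k) {S : Set ι} {t : ℝ}
    (ht : ∀ k ∈ S, t ≤ μ k) {x : E} (hx : x ∈ span 𝕜 (b '' S)) :
    t * ‖x‖ ^ 2 ≤ re ⟪T x, x⟫_𝕜 := by
  rw [hT.re_inner_apply_self_eq_sum hb, ← b.sum_sq_norm_inner_right, Finset.mul_sum]
  refine Finset.sum_le_sum fun k _ => ?_
  by_cases hk : k ∈ S
  · exact mul_le_mul_of_nonneg_right (ht k hk) (by positivity)
  · simp [b.inner_eq_zero_of_mem_span_image hx hk]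

end Rayleigh

theorem IsEigSeq.exists_orthonormalBasis {n : ℕ} {A : Matrix (Fin n) (Fin n) ℂ}
    {hA : A.IsHermitian} {α : Fin n → ℝ} (hα : IsEigSeq A hA α) :
    ∃ b : OrthonormalBasis (Fin n) ℂ (EuclideanSpace ℂ (Fin n)),
      ∀ k, toEuclideanLin A (b k) = (α k : ℂ) • b k := by
  obtain ⟨-, σ, hσ⟩ := hα
  refine ⟨hA.eigenvectorBasis.reindex σ.symm, fun k => ?_⟩
  rw [OrthonormalBasis.reindex_apply, Equiv.symm_symm, hσ, toLpLin_apply,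
    hA.mulVec_eigenvectorBasis, RCLike.real_smul_eq_coe_smul (K := ℂ)]
  rfl

-- Indices are 0-based: the paper's `γ_{i+j-1} ≤ α_i + β_j` reads `γ_{i+j} ≤ α_i + β_j` here.
/-- Weyl's inequality: for Hermitian `A`, `B` and `C = A + B` with decreasingly
ordered eigenvalues `α`, `β`, `γ`, one has `γ_{i+j-1} ≤ α_i + β_j` whenever
`i + j - 1 ≤ n` (here stated with 0-based indices: `γ_{i+j} ≤ α_i + β_j`
whenever `i + j < n`). -/
theorem weyl_inequality {n : ℕ} (A B : Matrix (Fin n) (Fin n) ℂ)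
    (hA : A.IsHermitian) (hB : B.IsHermitian) (hC : (A + B).IsHermitian)
    (α β γ : Fin n → ℝ)
    (hα : IsEigSeq A hA α) (hβ : IsEigSeq B hB β) (hγ : IsEigSeq (A + B) hC γ) :
    ∀ (i j : Fin n) (h : i.val + j.val < n),
      γ ⟨i.val + j.val, h⟩ ≤ α i + β j := by
  intro i j h
  set k : Fin n := ⟨i.val + j.val, h⟩
  obtain ⟨a, ha⟩ := hα.exists_orthonormalBasis
  obtain ⟨b, hb⟩ := hβ.exists_orthonormalBasis
  obtain ⟨c, hc⟩ := hγ.exists_orthonormalBasis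
  obtain ⟨x, hx0, hxa, hxb, hxc⟩ := exists_ne_zero_mem_of_finrank_add_finrank_add_finrank_gt
    (span ℂ (a '' ↑(Finset.Ici i))) (span ℂ (b '' ↑(Finset.Ici j))) (span ℂ (c '' ↑(Finset.Iic k)))
    (by simp only [OrthonormalBasis.finrank_span_image, Fin.card_Ici, Fin.card_Iic,
          finrank_euclideanSpace_fin, k]; omega)
  have hxA := LinearMap.IsSymmetric.re_inner_apply_self_le_of_mem_span
    (isSymmetric_toEuclideanLin_iff.mpr hA) ha
    (fun l hl => hα.1 (Finset.mem_Ici.mp hl)) hxa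
  have hxB := LinearMap.IsSymmetric.re_inner_apply_self_le_of_mem_span
    (isSymmetric_toEuclideanLin_iff.mpr hB) hb
    (fun l hl => hβ.1 (Finset.mem_Ici.mp hl)) hxb
  have hxC := LinearMap.IsSymmetric.le_re_inner_apply_self_of_mem_span
    (isSymmetric_toEuclideanLin_iff.mpr hC) hc
    (fun l hl => hγ.1 (Finset.mem_Iic.mp hl)) hxc
  have hx : γ k * ‖x‖ ^ 2 ≤ (α i + β j) * ‖x‖ ^ 2 := calc
    γ k * ‖x‖ ^ 2 ≤ re ⟪toEuclideanLin (A + B) x, x⟫_ℂ := hxC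
    _ = re ⟪toEuclideanLin A x, x⟫_ℂ + re ⟪toEuclideanLin B x, x⟫_ℂ := by
      rw [map_add, LinearMap.add_apply, inner_add_left, map_add]
    _ ≤ (α i + β j) * ‖x‖ ^ 2 := by linarith
  exact le_of_mul_le_mul_right hx (pow_pos (norm_pos_iff.mpr hx0) 2)
end

section
/- (Ky Fan's inequality) For n×n Hermitian matrices A, B and C = A + B, for every r < n the sum of the r largest eigenvalues of C is at most the sum of the r largest eigenvalues of A plus the sum of the r largest eigenvalues of B. -/
open Matrix BigOperators

/-!
Ky Fan's maximum principle: for Hermitian `A` with eigenvalues `λ₁ ≥ ⋯ ≥ λₙ`, the sum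
`λ₁ + ⋯ + λᵣ` is the maximum of `re tr (A P)` over matrices `0 ≤ P ≤ 1` of trace `r`.
In an eigenbasis of `A`, `re tr (A P) = ∑ λᵢ tᵢ` where the diagonal entries `tᵢ` of the
conjugated `P` lie in `[0, 1]` and sum to `r`; such a weighted sum is largest when all weight
sits on the `r` largest eigenvalues, and the spectral projection of `A` onto their
eigenvectors attains it. Taking for `P` that projection for `A + B`, linearity of the trace
gives `γ₁ + ⋯ + γᵣ = re tr (A P) + re tr (B P)`, and each term is bounded by the principle.
-/

theorem sum_mul_le_sum_of_threshold {ι : Type*} [Fintype ι] (T : Finset ι) (α s : ι → ℝ)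
    (c : ℝ) (hT : ∀ i ∈ T, c ≤ α i) (hTc : ∀ i ∉ T, α i ≤ c)
    (hs₀ : ∀ i, 0 ≤ s i) (hs₁ : ∀ i, s i ≤ 1) (hs : ∑ i, s i = T.card) :
    ∑ i, α i * s i ≤ ∑ i ∈ T, α i := by
  classical
  have hshifted : ∑ i, (α i - c) * s i ≤ ∑ i ∈ T, (α i - c) :=
    calc ∑ i, (α i - c) * s i ≤ ∑ i, if i ∈ T then α i - c else 0 := by
          refine Finset.sum_le_sum fun i _ => ?_
          split_ifs with hi
          · nlinarith [hT i hi, hs₁ i]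
          · nlinarith [hTc i hi, hs₀ i]
      _ = ∑ i ∈ T, (α i - c) := by rw [Finset.sum_ite_mem, Finset.univ_inter]
  have hlhs : ∑ i, α i * s i = ∑ i, (α i - c) * s i + c * T.card := by
    rw [← hs, Finset.mul_sum, ← Finset.sum_add_distrib]
    exact Finset.sum_congr rfl fun i _ => by ring
  have hrhs : ∑ i ∈ T, α i = ∑ i ∈ T, (α i - c) + c * T.card := by
    simp [Finset.sum_sub_distrib, mul_comm]
  linarith

theorem Antitone.sum_mul_le_sum_filter_val_lt {n r : ℕ} (hr : r < n) {α : Fin n → ℝ}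
    (hα : Antitone α) (s : Fin n → ℝ) (hs₀ : ∀ i, 0 ≤ s i) (hs₁ : ∀ i, s i ≤ 1)
    (hs : ∑ i, s i = r) :
    ∑ i, α i * s i ≤ ∑ i ∈ Finset.univ.filter (fun i : Fin n => i.val < r), α i := by
  refine sum_mul_le_sum_of_threshold _ α s (α ⟨r, hr⟩) ?_ ?_ hs₀ hs₁ ?_
  · intro i hi
    exact hα (Fin.le_def.mpr (Finset.mem_filter.mp hi).2.le)
  · intro i hi
    exact hα (Fin.le_def.mpr (by simpa using hi))
  · rw [hs, Fin.card_filter_val_lt, min_eq_right hr.le]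

namespace Matrix.IsHermitian

variable {𝕜 : Type*} [RCLike 𝕜] {ι : Type*} [Fintype ι] [DecidableEq ι]

theorem re_trace_mul_eq_sum_eigenvalues_mul {A : Matrix ι ι 𝕜} (hA : A.IsHermitian)
    (P : Matrix ι ι 𝕜) :
    RCLike.re (A * P).trace = ∑ i, hA.eigenvalues i * RCLike.re
      ((star (hA.eigenvectorUnitary : Matrix ι ι 𝕜) * P * hA.eigenvectorUnitary) i i) := by
  set U : Matrix ι ι 𝕜 := (hA.eigenvectorUnitary : Matrix ι ι 𝕜)
  have hdiag : star U * A * U = diagonal (RCLike.ofReal ∘ hA.eigenvalues) := by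
    rw [← hA.conjStarAlgAut_star_eigenvectorUnitary, Unitary.conjStarAlgAut_star_apply]
  have hUU : U * star U = 1 := mem_unitaryGroup_iff.mp hA.eigenvectorUnitary.2
  have hconj : (A * P).trace = (star U * A * U * (star U * P * U)).trace := by
    simp only [Matrix.mul_assoc]
    rw [← Matrix.mul_assoc U, hUU, Matrix.one_mul, trace_mul_comm (star U)]
    simp only [Matrix.mul_assoc, hUU, Matrix.mul_one]
  rw [hconj, hdiag, trace, map_sum]
  simp [diagonal_mul]

end Matrix.IsHermitian

namespace IsEigSeq

open scoped ComplexOrder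

variable {n : ℕ} {A : Matrix (Fin n) (Fin n) ℂ} {hA : A.IsHermitian} {α : Fin n → ℝ}

theorem re_trace_mul_le_sum_filter_val_lt (hα : IsEigSeq A hA α) {r : ℕ} (hr : r < n)
    {P : Matrix (Fin n) (Fin n) ℂ} (hP₀ : P.PosSemidef) (hP₁ : (1 - P).PosSemidef)
    (hPr : P.trace = r) :
    (A * P).trace.re ≤ ∑ i ∈ Finset.univ.filter (fun i : Fin n => i.val < r), α i := by
  obtain ⟨hanti, σ, hσ⟩ := hα
  set U : Matrix (Fin n) (Fin n) ℂ := (hA.eigenvectorUnitary : Matrix (Fin n) (Fin n) ℂ)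
  have hUU : star U * U = 1 := mem_unitaryGroup_iff'.mp hA.eigenvectorUnitary.2
  have hUU' : U * star U = 1 := mem_unitaryGroup_iff.mp hA.eigenvectorUnitary.2
  set M := star U * P * U
  have hM₀ : M.PosSemidef := hP₀.conjTranspose_mul_mul_same U
  have hM₁ : (1 - M).PosSemidef := by
    have := hP₁.conjTranspose_mul_mul_same U
    rwa [Matrix.mul_sub, Matrix.sub_mul, Matrix.mul_one, ← star_eq_conjTranspose, hUU] at this
  have hMr : M.trace = r := by
    rw [trace_mul_cycle, hUU', Matrix.one_mul, hPr]
  refine (hA.re_trace_mul_eq_sum_eigenvalues_mul P).trans_le ?_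
  simp only [RCLike.re_to_complex]
  rw [← Equiv.sum_comp σ]
  simp only [← hσ]
  refine hanti.sum_mul_le_sum_filter_val_lt hr _ (fun i => ?_) (fun i => ?_) ?_
  · exact (Complex.nonneg_iff.mp hM₀.diag_nonneg).1
  · simpa only [Matrix.sub_apply, one_apply_eq, Complex.sub_re, Complex.one_re, sub_nonneg] using
      (Complex.nonneg_iff.mp (hM₁.diag_nonneg (i := σ i))).1
  · rw [Equiv.sum_comp σ (fun i => (M i i).re), ← Complex.re_sum]
    exact congrArg Complex.re hMr

theorem exists_re_trace_mul_eq_sum_filter_val_lt (hα : IsEigSeq A hA α) {r : ℕ} (hr : r ≤ n) :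
    ∃ P : Matrix (Fin n) (Fin n) ℂ, P.PosSemidef ∧ (1 - P).PosSemidef ∧ P.trace = r ∧
      (A * P).trace.re = ∑ i ∈ Finset.univ.filter (fun i : Fin n => i.val < r), α i := by
  obtain ⟨-, σ, hσ⟩ := hα
  set U : Matrix (Fin n) (Fin n) ℂ := (hA.eigenvectorUnitary : Matrix (Fin n) (Fin n) ℂ)
  have hUU : star U * U = 1 := mem_unitaryGroup_iff'.mp hA.eigenvectorUnitary.2
  have hUU' : U * star U = 1 := mem_unitaryGroup_iff.mp hA.eigenvectorUnitary.2
  -- `U * diagonal d * star U` projects onto the eigenvectors of the `r` largest eigenvalues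
  set d : Fin n → ℂ := fun k => if (σ.symm k).val < r then 1 else 0
  have hd₀ : 0 ≤ d := fun k => by dsimp [d]; split_ifs <;> norm_num
  have hd₁ : 0 ≤ 1 - d := fun k => by dsimp [d]; split_ifs <;> norm_num
  refine ⟨U * diagonal d * star U, (PosSemidef.diagonal hd₀).mul_mul_conjTranspose_same U,
    ?_, ?_, ?_⟩
  · convert (PosSemidef.diagonal hd₁).mul_mul_conjTranspose_same U using 1
    rw [show (1 : Fin n → ℂ) - d = fun i => 1 - d i from rfl, ← diagonal_sub, diagonal_one,
      Matrix.mul_sub, Matrix.sub_mul, Matrix.mul_one, ← star_eq_conjTranspose, hUU']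
  · rw [trace_mul_cycle, hUU, Matrix.one_mul, trace_diagonal, ← Equiv.sum_comp σ]
    simp [d, Finset.sum_boole, Fin.card_filter_val_lt, min_eq_right hr]
  · have hcols : star U * (U * diagonal d * star U) * U = diagonal d := by
      simp only [← Matrix.mul_assoc, hUU, Matrix.one_mul]
      rw [Matrix.mul_assoc, hUU, Matrix.mul_one]
    rw [← RCLike.re_to_complex, hA.re_trace_mul_eq_sum_eigenvalues_mul, hcols,
      ← Equiv.sum_comp σ, Finset.sum_filter]
    refine Finset.sum_congr rfl fun j _ => ?_
    split_ifs with hj <;> simp [d, hj, hσ]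

end IsEigSeq

/-- Ky Fan's inequality: for Hermitian `A`, `B` and `C = A + B`, for every
`r < n` the sum of the `r` largest eigenvalues of `C` is at most the sum of
the `r` largest eigenvalues of `A` plus that of `B`. -/
theorem ky_fan_inequality {n : ℕ} (A B : Matrix (Fin n) (Fin n) ℂ)
    (hA : A.IsHermitian) (hB : B.IsHermitian) (hC : (A + B).IsHermitian)
    (α β γ : Fin n → ℝ)
    (hα : IsEigSeq A hA α) (hβ : IsEigSeq B hB β) (hγ : IsEigSeq (A + B) hC γ) :
    ∀ r : ℕ, r < n →
      ∑ i ∈ Finset.univ.filter (fun i : Fin n => i.val < r), γ i ≤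
        ∑ i ∈ Finset.univ.filter (fun i : Fin n => i.val < r), α i +
        ∑ i ∈ Finset.univ.filter (fun i : Fin n => i.val < r), β i := by
  intro r hr
  obtain ⟨P, hP₀, hP₁, hPr, hγP⟩ := hγ.exists_re_trace_mul_eq_sum_filter_val_lt hr.le
  rw [← hγP, Matrix.add_mul, trace_add, Complex.add_re]
  exact add_le_add (hα.re_trace_mul_le_sum_filter_val_lt hr hP₀ hP₁ hPr)
    (hβ.re_trace_mul_le_sum_filter_val_lt hr hP₀ hP₁ hPr)
end

section
/- (Lidskii–Wielandt inequalities) For n×n Hermitian matrices A, B and C = A + B, for every subset I ⊆ {1,…,n} of cardinality r < n, one has ∑_{i∈I} γ_i ≤ ∑_{i∈I} α_i + ∑_{i=1}^r β_i, where α, β, γ are the decreasingly ordered eigenvalues of A, B, C. -/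
/-!
Let `t = β_{r+1}` and let `P = (B - t)⁺`, the positive part of `B - t`, whose trace is
`∑_{k ≤ r} (β_k - t)`. The matrix `N = A + P + t` dominates both `A + B` and `A + t` in the Loewner
order, so by Weyl's monotonicity principle its eigenvalues satisfy `γ_i ≤ ν_i` and
`α_i + t ≤ ν_i`. The nonnegative gaps `ν_i - α_i - t` sum over all `i` to `trace P`, so
`∑_I γ ≤ ∑_I ν ≤ ∑_I α + r t + trace P = ∑_I α + ∑_{k ≤ r} β_k`.
-/

open Matrix BigOperators

open Finset Module
open scoped InnerProductSpace MatrixOrder ComplexOrder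

namespace OrthonormalBasis

variable {𝕜 E ι : Type*} [RCLike 𝕜] [NormedAddCommGroup E] [InnerProductSpace 𝕜 E] [Fintype ι]
  (b : OrthonormalBasis ι 𝕜 E)

theorem re_inner_apply_self_eq_sum {T : E →ₗ[𝕜] E} {e : ι → ℝ}
    (hT : ∀ j, T (b j) = (e j : 𝕜) • b j) (x : E) :
    RCLike.re ⟪T x, x⟫_𝕜 = ∑ j, e j * ‖⟪b j, x⟫_𝕜‖ ^ 2 := by
  have hTx : T x = ∑ j, (⟪b j, x⟫_𝕜 * e j) • b j := by
    conv_lhs => rw [← b.sum_repr' x]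
    simp only [map_sum, map_smul, hT, smul_smul]
  rw [hTx, sum_inner, map_sum]
  refine sum_congr rfl fun j _ => ?_
  rw [inner_smul_left, map_mul (starRingEnd 𝕜), RCLike.conj_ofReal, mul_right_comm,
    RCLike.conj_mul, ← RCLike.ofReal_pow, ← RCLike.ofReal_mul, RCLike.ofReal_re, mul_comm]

theorem inner_eq_zero_of_mem_span_image_s4 {S : Set ι} {x : E}
    (hx : x ∈ Submodule.span 𝕜 (b '' S)) {j : ι} (hj : j ∉ S) : ⟪b j, x⟫_𝕜 = 0 := by
  induction hx using Submodule.span_induction with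
  | mem y hy =>
    obtain ⟨k, hk, rfl⟩ := hy
    exact b.orthonormal.2 (ne_of_mem_of_not_mem hk hj).symm
  | zero => exact inner_zero_right _
  | add y z _ _ hy hz => rw [inner_add_right, hy, hz, add_zero]
  | smul c y _ hy => rw [inner_smul_right, hy, mul_zero]

theorem mul_norm_sq_le_re_inner_apply_self {T : E →ₗ[𝕜] E} {e : ι → ℝ}
    (hT : ∀ j, T (b j) = (e j : 𝕜) • b j) {S : Set ι} {c : ℝ} (hc : ∀ j ∈ S, c ≤ e j) {x : E}
    (hx : x ∈ Submodule.span 𝕜 (b '' S)) : c * ‖x‖ ^ 2 ≤ RCLike.re ⟪T x, x⟫_𝕜 := by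
  rw [b.re_inner_apply_self_eq_sum hT, ← b.sum_sq_norm_inner_right, mul_sum]
  refine sum_le_sum fun j _ => ?_
  by_cases hj : j ∈ S
  · exact mul_le_mul_of_nonneg_right (hc j hj) (by positivity)
  · simp [b.inner_eq_zero_of_mem_span_image_s4 hx hj]

theorem re_inner_apply_self_le_mul_norm_sq {T : E →ₗ[𝕜] E} {e : ι → ℝ}
    (hT : ∀ j, T (b j) = (e j : 𝕜) • b j) {S : Set ι} {d : ℝ} (hd : ∀ j ∈ S, e j ≤ d) {x : E}
    (hx : x ∈ Submodule.span 𝕜 (b '' S)) : RCLike.re ⟪T x, x⟫_𝕜 ≤ d * ‖x‖ ^ 2 := by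
  rw [b.re_inner_apply_self_eq_sum hT, ← b.sum_sq_norm_inner_right, mul_sum]
  refine sum_le_sum fun j _ => ?_
  by_cases hj : j ∈ S
  · exact mul_le_mul_of_nonneg_right (hd j hj) (by positivity)
  · simp [b.inner_eq_zero_of_mem_span_image_s4 hx hj]

theorem finrank_span_image_s4 (S : Finset ι) :
    finrank 𝕜 (Submodule.span 𝕜 (b '' S)) = #S := by
  classical
  have hb := b.orthonormal.linearIndependent
  rw [← coe_image, finrank_span_finset_eq_card, card_image_of_injective _ hb.injective]
  rw [coe_image]
  exact (hb.linearIndepOn _).id_image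

end OrthonormalBasis

theorem Submodule.exists_ne_zero_mem_inf_of_finrank_lt {K V : Type*} [DivisionRing K]
    [AddCommGroup V] [Module K V] [FiniteDimensional K V] {W₁ W₂ : Submodule K V}
    (h : finrank K V < finrank K W₁ + finrank K W₂) : ∃ x ≠ 0, x ∈ W₁ ∧ x ∈ W₂ := by
  have hsup := Submodule.finrank_le (W₁ ⊔ W₂)
  have hdim := Submodule.finrank_sup_add_finrank_inf_eq W₁ W₂
  have hne : W₁ ⊓ W₂ ≠ ⊥ := fun h0 => by
    rw [h0, finrank_bot] at hdim
    omega
  obtain ⟨x, hx, hx0⟩ := Submodule.exists_mem_ne_zero_of_ne_bot hne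
  exact ⟨x, hx0, hx⟩

/-- Courant–Fischer: when `#P + #Q > dim E` the spans of the `P`-eigenvectors of `T` and of the
`Q`-eigenvectors of `S` share a nonzero vector, whose Rayleigh quotients separate `c` and `d`. -/
theorem LinearMap.le_of_le_of_finrank_lt_card_add_card
    {𝕜 E ι κ : Type*} [RCLike 𝕜] [NormedAddCommGroup E] [InnerProductSpace 𝕜 E]
    [Fintype ι] [Fintype κ] {T S : E →ₗ[𝕜] E} (hTS : T ≤ S)
    (bT : OrthonormalBasis ι 𝕜 E) (bS : OrthonormalBasis κ 𝕜 E) {e : ι → ℝ} {f : κ → ℝ}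
    (hT : ∀ j, T (bT j) = (e j : 𝕜) • bT j) (hS : ∀ j, S (bS j) = (f j : 𝕜) • bS j)
    {P : Finset ι} {Q : Finset κ} (hPQ : finrank 𝕜 E < #P + #Q) {c d : ℝ}
    (hc : ∀ j ∈ P, c ≤ e j) (hd : ∀ j ∈ Q, f j ≤ d) : c ≤ d := by
  classical
  have := Module.Finite.of_basis bT.toBasis
  obtain ⟨x, hx0, hxT, hxS⟩ := Submodule.exists_ne_zero_mem_inf_of_finrank_lt
    (W₁ := Submodule.span 𝕜 (bT '' P)) (W₂ := Submodule.span 𝕜 (bS '' Q))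
    (by rwa [bT.finrank_span_image_s4, bS.finrank_span_image_s4])
  have hxTS : RCLike.re ⟪T x, x⟫_𝕜 ≤ RCLike.re ⟪S x, x⟫_𝕜 := by
    have := hTS.re_inner_nonneg_left x
    rwa [sub_apply, inner_sub_left, map_sub, sub_nonneg] at this
  have hx : 0 < ‖x‖ ^ 2 := by positivity
  refine le_of_mul_le_mul_right ?_ hx
  calc c * ‖x‖ ^ 2 ≤ RCLike.re ⟪T x, x⟫_𝕜 := bT.mul_norm_sq_le_re_inner_apply_self hT hc hxT
    _ ≤ RCLike.re ⟪S x, x⟫_𝕜 := hxTS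
    _ ≤ d * ‖x‖ ^ 2 := bS.re_inner_apply_self_le_mul_norm_sq hS hd hxS

theorem Antitone.sum_max_sub_zero_eq_sum_lt {ι : Type*} [Fintype ι] [LinearOrder ι]
    {β : ι → ℝ} (hβ : Antitone β) (j : ι) :
    ∑ k, max (β k - β j) 0 = ∑ k ∈ univ.filter (· < j), (β k - β j) := by
  rw [sum_filter]
  refine sum_congr rfl fun k _ => ?_
  split_ifs with hk
  · exact max_eq_left (sub_nonneg.2 (hβ hk.le))
  · exact max_eq_right (sub_nonpos.2 (hβ (not_lt.1 hk)))

namespace Matrix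

theorem IsHermitian.trace_cfc {n 𝕜 : Type*} [RCLike 𝕜] [Fintype n] [DecidableEq n]
    {A : Matrix n n 𝕜} (hA : A.IsHermitian) (f : ℝ → ℝ) :
    (cfc f A).trace = ((∑ i, f (hA.eigenvalues i) : ℝ) : 𝕜) := by
  rw [hA.cfc_eq, IsHermitian.cfc, Unitary.conjStarAlgAut_apply, trace_mul_cycle,
    Unitary.coe_star_mul_self, one_mul, trace_diagonal, RCLike.ofReal_sum]
  rfl

theorem IsHermitian.le_cfc_max_sub_zero_add_smul_one {n 𝕜 : Type*} [RCLike 𝕜] [Fintype n]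
    [DecidableEq n] {B : Matrix n n 𝕜} (hB : B.IsHermitian) (t : ℝ) :
    B ≤ cfc (fun x : ℝ => max (x - t) 0) B + t • 1 :=
  calc B = cfc (fun x : ℝ => x) B := (cfc_id' ℝ B hB).symm
    _ ≤ cfc (fun x : ℝ => max (x - t) 0 + t) B :=
      cfc_mono fun x _ => by linarith [le_max_left (x - t) 0]
    _ = cfc (fun x : ℝ => max (x - t) 0) B + t • 1 := by
      rw [cfc_add_const t _ B, Algebra.algebraMap_eq_smul_one]

end Matrix

section IsEigSeq

variable {n : ℕ} {M N : Matrix (Fin n) (Fin n) ℂ} {hM : M.IsHermitian} {hN : N.IsHermitian}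
  {μ ν : Fin n → ℝ}

theorem exists_isEigSeq (hM : M.IsHermitian) : ∃ μ, IsEigSeq M hM μ := by
  let σ : Equiv.Perm (Fin n) := Fin.revPerm.trans (Tuple.sort hM.eigenvalues)
  exact ⟨fun i => hM.eigenvalues (σ i),
    fun _ _ hij => Tuple.monotone_sort hM.eigenvalues (Fin.rev_le_rev.mpr hij), σ, fun _ => rfl⟩

theorem IsEigSeq.sum_comp (hμ : IsEigSeq M hM μ) (f : ℝ → ℝ) :
    ∑ i, f (μ i) = ∑ i, f (hM.eigenvalues i) := by
  obtain ⟨-, σ, hσ⟩ := hμ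
  simp_rw [hσ]
  exact Equiv.sum_comp σ (f ∘ hM.eigenvalues)

theorem IsEigSeq.ofReal_sum_eq_trace (hμ : IsEigSeq M hM μ) : ((∑ i, μ i : ℝ) : ℂ) = M.trace := by
  rw [hM.trace_eq_sum_eigenvalues, hμ.sum_comp fun x => x, Complex.ofReal_sum]
  rfl

theorem IsEigSeq.add_le_of_add_smul_one_le (hμ : IsEigSeq M hM μ) (hν : IsEigSeq N hN ν)
    {t : ℝ} (h : M + t • 1 ≤ N) (i : Fin n) : μ i + t ≤ ν i := by
  obtain ⟨hμa, σ, hσ⟩ := hμ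
  obtain ⟨hνa, τ, hτ⟩ := hν
  refine LinearMap.le_of_le_of_finrank_lt_card_add_card
    (T := toEuclideanLin (M + t • 1)) (S := toEuclideanLin N)
    (by rwa [LinearMap.le_def, ← map_sub, isPositive_toEuclideanLin_iff])
    hM.eigenvectorBasis hN.eigenvectorBasis
    (e := fun j => hM.eigenvalues j + t) (f := hN.eigenvalues)
    (P := (Iic i).map σ.toEmbedding) (Q := (Ici i).map τ.toEmbedding) ?_ ?_ ?_ ?_ ?_
  · intro j
    ext k
    simp [smul_mulVec, hM.mulVec_eigenvectorBasis, add_mul]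
  · intro j
    ext k
    simp [hN.mulVec_eigenvectorBasis]
  · simp only [finrank_euclideanSpace, Fintype.card_fin, card_map, Fin.card_Iic, Fin.card_Ici]
    omega
  · simp only [mem_map, mem_Iic, Equiv.coe_toEmbedding, forall_exists_index, and_imp]
    rintro _ k hk rfl
    simpa [← hσ] using hμa hk
  · simp only [mem_map, mem_Ici, Equiv.coe_toEmbedding, forall_exists_index, and_imp]
    rintro _ k hk rfl
    simpa [← hτ] using hνa hk

end IsEigSeq

/-- Lidskii–Wielandt inequalities: for Hermitian `A`, `B` and `C = A + B`, for
every subset `I` of `{1,…,n}` of cardinality `r < n`,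
`∑_{i∈I} γ_i ≤ ∑_{i∈I} α_i + ∑_{i=1}^r β_i`. -/
theorem lidskii_wielandt {n : ℕ} (A B : Matrix (Fin n) (Fin n) ℂ)
    (hA : A.IsHermitian) (hB : B.IsHermitian) (hC : (A + B).IsHermitian)
    (α β γ : Fin n → ℝ)
    (hα : IsEigSeq A hA α) (hβ : IsEigSeq B hB β) (hγ : IsEigSeq (A + B) hC γ) :
    ∀ (r : ℕ), r < n → ∀ I : Finset (Fin n), I.card = r →
      ∑ i ∈ I, γ i ≤ ∑ i ∈ I, α i +
        ∑ i ∈ Finset.univ.filter (fun i : Fin n => i.val < r), β i := by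
  intro r hr I hI
  set t := β ⟨r, hr⟩
  set P := cfc (fun x : ℝ => max (x - t) 0) B
  have hP : 0 ≤ P := cfc_nonneg fun x _ => le_max_right _ _
  have hBP : B ≤ P + t • 1 := hB.le_cfc_max_sub_zero_add_smul_one t
  have hN : (A + P + t • 1).IsHermitian :=
    (hA.add (nonneg_iff_posSemidef.1 hP).isHermitian).add (isHermitian_one.smul (.all t))
  obtain ⟨ν, hν⟩ := exists_isEigSeq hN
  have hγν : ∀ i, γ i ≤ ν i := fun i => by
    simpa using hγ.add_le_of_add_smul_one_le hν (t := 0) (by simpa [add_assoc] using hBP) i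
  have hαν : ∀ i, α i + t ≤ ν i := hα.add_le_of_add_smul_one_le hν (by simpa using hP)
  have htrace : ∑ i, ν i = ∑ i, α i + ∑ k, max (β k - t) 0 + t * n := by
    have := hν.ofReal_sum_eq_trace
    rw [trace_add, trace_add, ← hα.ofReal_sum_eq_trace, hB.trace_cfc,
      ← hβ.sum_comp fun x => max (x - t) 0, trace_smul, trace_one, Fintype.card_fin,
      Complex.real_smul, RCLike.ofReal_eq_complex_ofReal] at this
    exact_mod_cast this
  have hpos :
      ∑ k, max (β k - t) 0 = ∑ k ∈ univ.filter (fun k : Fin n => k.val < r), β k - r * t := by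
    rw [hβ.1.sum_max_sub_zero_eq_sum_lt, sum_sub_distrib, sum_const, nsmul_eq_mul]
    congr 3
    exact (Fin.card_filter_val_lt).trans (min_eq_right hr.le)
  have hslack : ∑ i ∈ I, (ν i - α i - t) ≤ ∑ i, (ν i - α i - t) :=
    sum_le_univ_sum_of_nonneg fun i => by linarith [hαν i]
  simp only [sum_sub_distrib, sum_const, hI, card_univ, Fintype.card_fin, nsmul_eq_mul] at hslack
  linarith [sum_le_sum fun i (_ : i ∈ I) => hγν i]
end

section
/- For n = 2, the conditions γ₁ + γ₂ = α₁ + α₂ + β₁ + β₂, γ₁ ≤ α₁ + β₁, γ₂ ≤ α₂ + β₁, and γ₂ ≤ α₁ + β₂ are necessary and sufficient for the existence of 2×2 Hermitian matrices A, B, C = A + B with eigenvalues α₁ ≥ α₂, β₁ ≥ β₂, γ₁ ≥ γ₂ respectively. -/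
/-!
In the Loewner order, `A ≤ r • 1` holds exactly when every eigenvalue of `A` is at most `r`, so
the top eigenvalue is the least such `r`. Hence `A + B ≤ (α₁ + β₁) • 1` gives `γ₁ ≤ α₁ + β₁`, and
`A = (A + B) - B ≤ (γ₁ - β₂) • 1` gives `α₁ + β₂ ≤ γ₁`, likewise `α₂ + β₁ ≤ γ₁`; with the trace
identity these are the stated conditions.

Conversely, take `A = diag(α₁, α₂)` and `B_t = !![β₂ + t, c; c, β₁ - t]` with
`c = √(t (β₁ - β₂ - t))`, `0 ≤ t ≤ β₁ - β₂`, so that `B_t` has eigenvalues `β₁, β₂`. Then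
`det (A + B_t) = (α₁ + β₂)(α₂ + β₁) - t (α₁ - α₂)` runs from `(α₁ + β₂)(α₂ + β₁)` down to
`(α₁ + β₁)(α₂ + β₂)`, and the conditions say precisely that `γ₁ γ₂` lies in between. A `2 × 2`
Hermitian matrix has its eigenvalues determined by its trace and determinant.
-/

open Matrix BigOperators

open scoped MatrixOrder

namespace Matrix.IsHermitian

variable {𝕜 n : Type*} [RCLike 𝕜] [Fintype n] [DecidableEq n] {A : Matrix n n 𝕜}

lemma le_algebraMap_iff_eigenvalues_le (hA : A.IsHermitian) {r : ℝ} :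
    A ≤ algebraMap ℝ _ r ↔ ∀ i, hA.eigenvalues i ≤ r := by
  rw [le_algebraMap_iff_spectrum_le hA.isSelfAdjoint, hA.spectrum_real_eq_range_eigenvalues,
    Set.forall_mem_range]

lemma algebraMap_le_iff_le_eigenvalues (hA : A.IsHermitian) {r : ℝ} :
    algebraMap ℝ _ r ≤ A ↔ ∀ i, r ≤ hA.eigenvalues i := by
  rw [algebraMap_le_iff_le_spectrum hA.isSelfAdjoint, hA.spectrum_real_eq_range_eigenvalues,
    Set.forall_mem_range]

end Matrix.IsHermitian

namespace IsEigSeq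

variable {n : ℕ} {A B : Matrix (Fin n) (Fin n) ℂ} {hA : A.IsHermitian} {hB : B.IsHermitian}
  {hC : (A + B).IsHermitian} {α β γ : Fin n → ℝ}

lemma trace_eq_sum (h : IsEigSeq A hA α) : A.trace = ∑ i, (α i : ℂ) := by
  obtain ⟨-, σ, hσ⟩ := h
  rw [hA.trace_eq_sum_eigenvalues, ← Equiv.sum_comp σ]
  simp [hσ]

lemma sum_eq_sum_add_sum (hEA : IsEigSeq A hA α) (hEB : IsEigSeq B hB β)
    (hEC : IsEigSeq (A + B) hC γ) : ∑ i, γ i = ∑ i, α i + ∑ i, β i := by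
  apply Complex.ofReal_injective
  push_cast
  rw [← hEA.trace_eq_sum, ← hEB.trace_eq_sum, ← hEC.trace_eq_sum, trace_add]

lemma exists_eigenvalues_eq (h : IsEigSeq A hA α) (j : Fin n) : ∃ i, hA.eigenvalues i = α j := by
  obtain ⟨-, σ, hσ⟩ := h
  exact ⟨σ j, (hσ j).symm⟩

lemma exists_eq_eigenvalues (h : IsEigSeq A hA α) (i : Fin n) : ∃ j, hA.eigenvalues i = α j := by
  obtain ⟨-, σ, hσ⟩ := h
  exact ⟨σ.symm i, by simp [hσ]⟩

lemma apply_le_of_le_algebraMap (h : IsEigSeq A hA α) {r : ℝ} (hr : A ≤ algebraMap ℝ _ r)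
    (j : Fin n) : α j ≤ r := by
  obtain ⟨i, hi⟩ := h.exists_eigenvalues_eq j
  exact hi ▸ (hA.le_algebraMap_iff_eigenvalues_le.1 hr) i

end IsEigSeq

namespace IsEigSeq

variable {n : ℕ} {A B : Matrix (Fin (n + 1)) (Fin (n + 1)) ℂ} {hA : A.IsHermitian}
  {hB : B.IsHermitian} {hC : (A + B).IsHermitian} {α β γ : Fin (n + 1) → ℝ}

lemma le_algebraMap (h : IsEigSeq A hA α) : A ≤ algebraMap ℝ _ (α 0) :=
  hA.le_algebraMap_iff_eigenvalues_le.2 fun i ↦ by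
    obtain ⟨j, hj⟩ := h.exists_eq_eigenvalues i
    exact hj ▸ h.1 (Fin.zero_le j)

lemma algebraMap_le (h : IsEigSeq A hA α) : algebraMap ℝ _ (α (Fin.last n)) ≤ A :=
  hA.algebraMap_le_iff_le_eigenvalues.2 fun i ↦ by
    obtain ⟨j, hj⟩ := h.exists_eq_eigenvalues i
    exact hj ▸ h.1 (Fin.le_last j)

lemma apply_zero_le_add (hEA : IsEigSeq A hA α) (hEB : IsEigSeq B hB β)
    (hEC : IsEigSeq (A + B) hC γ) : γ 0 ≤ α 0 + β 0 := by
  refine hEC.apply_le_of_le_algebraMap ?_ 0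
  rw [map_add]
  exact add_le_add hEA.le_algebraMap hEB.le_algebraMap

lemma add_apply_last_le (hEA : IsEigSeq A hA α) (hEB : IsEigSeq B hB β)
    (hEC : IsEigSeq (A + B) hC γ) : α 0 + β (Fin.last n) ≤ γ 0 := by
  have : A ≤ algebraMap ℝ _ (γ 0 - β (Fin.last n)) := by
    rw [map_sub]
    simpa using sub_le_sub hEC.le_algebraMap hEB.algebraMap_le
  linarith [hEA.apply_le_of_le_algebraMap this 0]

lemma apply_last_add_le (hEA : IsEigSeq A hA α) (hEB : IsEigSeq B hB β)
    (hEC : IsEigSeq (A + B) hC γ) : α (Fin.last n) + β 0 ≤ γ 0 := by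
  have : B ≤ algebraMap ℝ _ (γ 0 - α (Fin.last n)) := by
    rw [map_sub]
    simpa using sub_le_sub hEC.le_algebraMap hEA.algebraMap_le
  linarith [hEB.apply_le_of_le_algebraMap this 0]

end IsEigSeq

def realSymm (a b c : ℝ) : Matrix (Fin 2) (Fin 2) ℂ := !![(a : ℂ), c; c, b]

lemma isHermitian_realSymm (a b c : ℝ) : (realSymm a b c).IsHermitian := by
  ext i j
  fin_cases i <;> fin_cases j <;> simp [realSymm]

lemma realSymm_add (a b c a' b' c' : ℝ) :
    realSymm a b c + realSymm a' b' c' = realSymm (a + a') (b + b') (c + c') := by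
  ext i j
  fin_cases i <;> fin_cases j <;> simp [realSymm]

lemma isEigSeq_of_trace_det {A : Matrix (Fin 2) (Fin 2) ℂ} (hA : A.IsHermitian) {x y : ℝ}
    (hxy : y ≤ x) (htr : A.trace = x + y) (hdet : A.det = x * y) :
    IsEigSeq A hA ![x, y] := by
  have hsum : hA.eigenvalues 0 + hA.eigenvalues 1 = x + y := by
    have := hA.trace_eq_sum_eigenvalues.symm.trans htr
    simp only [Fin.sum_univ_two] at this
    exact Complex.ofReal_injective (by push_cast; exact this)
  have hprod : hA.eigenvalues 0 * hA.eigenvalues 1 = x * y := by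
    have := hA.det_eq_prod_eigenvalues.symm.trans hdet
    simp only [Fin.prod_univ_two] at this
    exact Complex.ofReal_injective (by push_cast; exact this)
  have hroot : (hA.eigenvalues 0 - x) * (hA.eigenvalues 0 - y) = 0 := by
    linear_combination hA.eigenvalues 0 * hsum - hprod
  refine ⟨by simpa using hxy, ?_⟩
  rcases mul_eq_zero.1 hroot with h | h
  · exact ⟨1, fun i ↦ by fin_cases i <;> simp <;> linarith⟩
  · exact ⟨Equiv.swap 0 1, fun i ↦ by fin_cases i <;> simp <;> linarith⟩

lemma isEigSeq_of_eq_realSymm {A : Matrix (Fin 2) (Fin 2) ℂ} (hA : A.IsHermitian)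
    {a b c x y : ℝ} (hAeq : A = realSymm a b c) (hxy : y ≤ x) (htr : a + b = x + y)
    (hdet : a * b - c * c = x * y) : IsEigSeq A hA ![x, y] := by
  subst hAeq
  apply isEigSeq_of_trace_det hA hxy
  · rw [realSymm, trace_fin_two_of]
    exact_mod_cast htr
  · rw [realSymm, det_fin_two_of]
    exact_mod_cast hdet

theorem exists_isEigSeq_add {α₁ α₂ β₁ β₂ γ₁ γ₂ : ℝ}
    (hα : α₂ ≤ α₁) (hβ : β₂ ≤ β₁) (hγ : γ₂ ≤ γ₁) (hsum : γ₁ + γ₂ = α₁ + α₂ + β₁ + β₂)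
    (h₁ : γ₁ ≤ α₁ + β₁) (h₂ : γ₂ ≤ α₂ + β₁) (h₃ : γ₂ ≤ α₁ + β₂) :
    ∃ (A B : Matrix (Fin 2) (Fin 2) ℂ) (hA : A.IsHermitian) (hB : B.IsHermitian)
        (hC : (A + B).IsHermitian),
      IsEigSeq A hA ![α₁, α₂] ∧ IsEigSeq B hB ![β₁, β₂] ∧ IsEigSeq (A + B) hC ![γ₁, γ₂] := by
  have hlo : (α₁ + β₁) * (α₂ + β₂) ≤ γ₁ * γ₂ := by
    have : α₂ + β₂ ≤ γ₁ := by linarith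
    linear_combination mul_nonneg (sub_nonneg.2 h₁) (sub_nonneg.2 this) - γ₁ * hsum
  have hhi : γ₁ * γ₂ ≤ (α₁ + β₂) * (α₂ + β₁) := by
    linear_combination mul_nonneg (sub_nonneg.2 h₂) (sub_nonneg.2 h₃) + γ₂ * hsum
  obtain ⟨t, ⟨ht₀, ht₁⟩, ht⟩ : ∃ t ∈ Set.Icc 0 (β₁ - β₂),
      (α₁ + β₂) * (α₂ + β₁) - t * (α₁ - α₂) = γ₁ * γ₂ :=
    intermediate_value_Icc' (by linarith) (by fun_prop) ⟨by linarith, by simpa using hhi⟩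
  set c := √(t * (β₁ - β₂ - t))
  have hc : c * c = t * (β₁ - β₂ - t) := Real.mul_self_sqrt (mul_nonneg ht₀ (by linarith))
  refine ⟨realSymm α₁ α₂ 0, realSymm (β₂ + t) (β₁ - t) c, isHermitian_realSymm ..,
    isHermitian_realSymm .., (isHermitian_realSymm ..).add (isHermitian_realSymm ..),
    isEigSeq_of_eq_realSymm _ rfl hα (by ring) (by ring),
    isEigSeq_of_eq_realSymm _ rfl hβ (by ring) (by linear_combination -hc),
    isEigSeq_of_eq_realSymm _ (realSymm_add ..) hγ (by linarith) ?_⟩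
  linear_combination ht - hc

/-- For `n = 2`, the conditions `γ₁ + γ₂ = α₁ + α₂ + β₁ + β₂`,
`γ₁ ≤ α₁ + β₁`, `γ₂ ≤ α₂ + β₁`, `γ₂ ≤ α₁ + β₂` are necessary and sufficient
for the existence of `2×2` Hermitian matrices `A`, `B`, `C = A + B` with
eigenvalues `α₁ ≥ α₂`, `β₁ ≥ β₂`, `γ₁ ≥ γ₂`. -/
theorem two_by_two_eigenvalue_characterization
    (α₁ α₂ β₁ β₂ γ₁ γ₂ : ℝ)
    (hα : α₂ ≤ α₁) (hβ : β₂ ≤ β₁) (hγ : γ₂ ≤ γ₁) :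
    (γ₁ + γ₂ = α₁ + α₂ + β₁ + β₂ ∧ γ₁ ≤ α₁ + β₁ ∧ γ₂ ≤ α₂ + β₁ ∧ γ₂ ≤ α₁ + β₂) ↔
    (∃ (A B : Matrix (Fin 2) (Fin 2) ℂ) (hA : A.IsHermitian) (hB : B.IsHermitian)
        (hC : (A + B).IsHermitian),
      IsEigSeq A hA ![α₁, α₂] ∧ IsEigSeq B hB ![β₁, β₂] ∧
        IsEigSeq (A + B) hC ![γ₁, γ₂]) := by
  constructor
  · rintro ⟨hsum, h₁, h₂, h₃⟩
    exact exists_isEigSeq_add hα hβ hγ hsum h₁ h₂ h₃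
  · rintro ⟨A, B, hA, hB, hC, hEA, hEB, hEC⟩
    have htrace := hEA.sum_eq_sum_add_sum hEB hEC
    have hupper := hEA.apply_zero_le_add hEB hEC
    have hlowerA := hEA.add_apply_last_le hEB hEC
    have hlowerB := hEA.apply_last_add_le hEB hEC
    simp only [Nat.reduceAdd, Fin.sum_univ_two, Fin.isValue, cons_val_zero, cons_val_one,
      cons_val_fin_one, Fin.last, Fin.mk_one] at htrace hupper hlowerA hlowerB
    exact ⟨by linarith, hupper, by linarith, by linarith⟩
end

section
/- For any weakly decreasing real sequences α, β, γ of length 6 with ∑γ_i = ∑α_i + ∑β_i, the inequality γ₂ + γ₄ + γ₆ ≤ α₁ + α₃ + α₅ + β₁ + β₃ + β₅ holds. -/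
/-!
Pairing consecutive entries of a decreasing sequence of even length, each pair `(a, b)` has
`2 b ≤ a + b ≤ 2 a`; so twice the sum of the odd-position entries is at most the total, which is at
most twice the sum of the even-position entries. Applied to `γ` on the left and to `α`, `β` on the
right, the trace identity gives `2 (γ₂ + γ₄ + γ₆) ≤ 2 (α₁ + α₃ + α₅ + β₁ + β₃ + β₅)`.
-/

open Finset

-- `finProdFinEquiv (k, j) : Fin (n * 2)` is the index `2 k + j`.
theorem Fin.sum_univ_mul_two {M : Type*} [AddCommMonoid M] {n : ℕ} (f : Fin (n * 2) → M) :
    ∑ i, f i = ∑ k : Fin n, (f (finProdFinEquiv (k, 0)) + f (finProdFinEquiv (k, 1))) := by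
  rw [← finProdFinEquiv.sum_comp, Fintype.sum_prod_type]
  simp only [Fin.sum_univ_two]

theorem finProdFinEquiv_zero_le_one {n : ℕ} (k : Fin n) :
    finProdFinEquiv (k, (0 : Fin 2)) ≤ finProdFinEquiv (k, 1) := by
  simp [Fin.le_def, finProdFinEquiv]

namespace Antitone

variable {M : Type*} [AddCommMonoid M] [PartialOrder M] [IsOrderedAddMonoid M]

theorem sum_le_two_smul_sum_even {n : ℕ} {f : Fin (n * 2) → M} (hf : Antitone f) :
    ∑ i, f i ≤ 2 • ∑ k : Fin n, f (finProdFinEquiv (k, 0)) := by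
  rw [Fin.sum_univ_mul_two, two_smul, ← sum_add_distrib]
  gcongr with k
  exact hf (finProdFinEquiv_zero_le_one k)

theorem two_smul_sum_odd_le_sum {n : ℕ} {f : Fin (n * 2) → M} (hf : Antitone f) :
    2 • ∑ k : Fin n, f (finProdFinEquiv (k, 1)) ≤ ∑ i, f i := by
  rw [Fin.sum_univ_mul_two, two_smul, ← sum_add_distrib]
  gcongr with k
  exact hf (finProdFinEquiv_zero_le_one k)

theorem sum_fin_six_le_two_smul_even {f : Fin 6 → M} (hf : Antitone f) :
    ∑ i, f i ≤ 2 • (f 0 + f 2 + f 4) := by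
  have h := hf.sum_le_two_smul_sum_even (n := 3)
  rwa [Fin.sum_univ_three] at h

theorem two_smul_odd_le_sum_fin_six {f : Fin 6 → M} (hf : Antitone f) :
    2 • (f 1 + f 3 + f 5) ≤ ∑ i, f i := by
  have h := hf.two_smul_sum_odd_le_sum (n := 3)
  rwa [Fin.sum_univ_three] at h

end Antitone

/-- For weakly decreasing real sequences `α`, `β`, `γ` of length 6 with
`∑γ = ∑α + ∑β`, one has `γ₂ + γ₄ + γ₆ ≤ α₁ + α₃ + α₅ + β₁ + β₃ + β₅`
(1-based indices). -/
theorem even_odd_redundant_inequality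
    (α β γ : Fin 6 → ℝ)
    (hα : Antitone α) (hβ : Antitone β) (hγ : Antitone γ)
    (htrace : ∑ i, γ i = ∑ i, α i + ∑ i, β i) :
    γ 1 + γ 3 + γ 5 ≤ α 0 + α 2 + α 4 + (β 0 + β 2 + β 4) := by
  have hα' := hα.sum_fin_six_le_two_smul_even
  have hβ' := hβ.sum_fin_six_le_two_smul_even
  have hγ' := hγ.two_smul_odd_le_sum_fin_six
  rw [two_nsmul] at hα' hβ' hγ'
  linarith
end

section
/- (Rayleigh trace lower bound) Let A be an n×n Hermitian matrix with eigenvalues α₁ ≥ … ≥ αₙ and orthonormal eigenvectors v₁,…,vₙ, and let F_k be the span of v₁,…,v_k. If L is an r-dimensional subspace of ℂⁿ with dim(L ∩ F_{i_p}) ≥ p for 1 ≤ p ≤ r (where i₁ < … < i_r), then for any orthonormal basis u₁,…,u_r of L, the Rayleigh trace ∑_{p=1}^r ⟨A u_p, u_p⟩ ≥ ∑_{p=1}^r α_{i_p}. -/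
/-!
Expanding each `u_p` in the eigenbasis gives `R_A(L) = ∑_j α_j t_j` with weights
`t_j = ∑_p |⟨v_j, u_p⟩|²`, which are nonnegative and sum to `r`. An orthonormal basis of
`L ∩ F_{i_p}` together with Bessel's inequality inside `F_{i_p}` gives `p ≤ ∑_{j ≤ i_p} t_j`, so the
partial sums of `t` dominate those of the counting weights `m_j = #{p | i_p = j}`, and both sum to
`r`. Since `α` is decreasing, Abel summation turns this into `∑_p α_{i_p} = ∑_j α_j m_j ≤ ∑_j α_j t_j`.
-/

open Matrix Finset Module Submodule
open scoped InnerProductSpace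

theorem Fin.last_mul_sum_le_sum_mul_of_antitone {n : ℕ} {a : Fin (n + 1) → ℝ} (ha : Antitone a)
    {d : Fin (n + 1) → ℝ} (hd : ∀ k, 0 ≤ ∑ j ∈ Iic k, d j) :
    a (Fin.last n) * ∑ j, d j ≤ ∑ j, a j * d j := by
  induction n with
  | zero => simp
  | succ n ih =>
    have hd' : ∀ k : Fin (n + 1), 0 ≤ ∑ j ∈ Iic k, d j.castSucc := fun k => by
      simpa only [Fin.sum_Iic_castSucc] using hd k.castSucc
    have hsum : 0 ≤ ∑ j : Fin (n + 1), d j.castSucc := by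
      simpa only [← Fin.top_eq_last, Iic_top] using hd' ⊤
    have hlast : a (Fin.last (n + 1)) ≤ a (Fin.last n).castSucc := ha (Fin.le_last _)
    have := ih (a := fun j => a j.castSucc) (fun _ _ h => ha (Fin.castSucc_le_castSucc_iff.mpr h)) hd'
    rw [Fin.sum_univ_castSucc (f := d), Fin.sum_univ_castSucc (f := fun j => a j * d j), mul_add]
    linarith [mul_le_mul_of_nonneg_right hlast hsum]

theorem card_filter_le_le_sum_Iic {n r : ℕ} {t : Fin n → ℝ} (ht : ∀ j, 0 ≤ t j) {i : Fin r → Fin n}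
    (hpart : ∀ p : Fin r, (p + 1 : ℕ) ≤ ∑ j ∈ Iic (i p), t j) (k : Fin n) :
    (#{p | i p ≤ k} : ℝ) ≤ ∑ j ∈ Iic k, t j := by
  obtain hS | hS := (univ.filter fun p => i p ≤ k).eq_empty_or_nonempty
  · simpa [hS] using sum_nonneg fun j _ => ht j
  set p₀ := (univ.filter fun p => i p ≤ k).max' hS
  have hp₀ : i p₀ ≤ k := (mem_filter.mp (max'_mem _ hS)).2
  calc (#{p | i p ≤ k} : ℝ) ≤ #(Iic p₀) := by
        exact_mod_cast card_le_card fun p hp => mem_Iic.mpr (le_max' _ p hp)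
    _ = (p₀ + 1 : ℕ) := by simp
    _ ≤ ∑ j ∈ Iic (i p₀), t j := hpart p₀
    _ ≤ ∑ j ∈ Iic k, t j :=
        sum_le_sum_of_subset_of_nonneg (Iic_subset_Iic.mpr hp₀) fun j _ _ => ht j

theorem sum_comp_le_sum_mul_of_antitone {n r : ℕ} {α : Fin n → ℝ} (hα : Antitone α)
    {t : Fin n → ℝ} (ht : ∀ j, 0 ≤ t j) (htot : ∑ j, t j = r) {i : Fin r → Fin n}
    (hpart : ∀ p : Fin r, (p + 1 : ℕ) ≤ ∑ j ∈ Iic (i p), t j) :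
    ∑ p, α (i p) ≤ ∑ j, α j * t j := by
  obtain _ | n := n
  · have := Function.isEmpty i
    simp
  set m : Fin (n + 1) → ℝ := fun j => ∑ p, if i p = j then 1 else 0
  have hm_Iic : ∀ k, ∑ j ∈ Iic k, m j = #{p | i p ≤ k} := fun k => by
    simp only [m]; rw [sum_comm]; simp
  have hm_tot : ∑ j, m j = r := by
    simp only [m]; rw [sum_comm]; simp
  have hm_sum : ∑ j, α j * m j = ∑ p, α (i p) := by
    simp only [m, mul_sum]; rw [sum_comm]; simp
  have := Fin.last_mul_sum_le_sum_mul_of_antitone hα (d := t - m) fun k => by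
    simpa [sum_sub_distrib, hm_Iic, sub_nonneg] using card_filter_le_le_sum_Iic ht hpart k
  simp only [Pi.sub_apply, mul_sub, sum_sub_distrib, htot, hm_tot, hm_sum] at this
  linarith

theorem LinearEquiv.finrank_span_image_inf_span_image {R M N : Type*} [Semiring R]
    [AddCommMonoid M] [Module R M] [AddCommMonoid N] [Module R N] (e : M ≃ₗ[R] N) (S T : Set M) :
    finrank R ↥(span R (e '' S) ⊓ span R (e '' T)) = finrank R ↥(span R S ⊓ span R T) := by
  rw [← e.finrank_map_eq, Submodule.map_inf _ e.injective, Submodule.map_span, Submodule.map_span]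
  rfl

section InnerProductSpace

variable {𝕜 E ι κ : Type*} [RCLike 𝕜] [NormedAddCommGroup E] [InnerProductSpace 𝕜 E]

theorem Orthonormal.sum_norm_inner_sq_of_mem_span {V : ι → E} (hV : Orthonormal 𝕜 V)
    {s : Finset ι} {x : E} (hx : x ∈ span 𝕜 (V '' s)) :
    ∑ j ∈ s, ‖⟪V j, x⟫_𝕜‖ ^ 2 = ‖x‖ ^ 2 := by
  classical
  have hx' : x ∈ span 𝕜 (s.image V : Set E) := by rwa [coe_image]
  have := (OrthonormalBasis.span hV s).sum_sq_norm_inner_right ⟨x, hx'⟩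
  simp only [OrthonormalBasis.span_apply, coe_inner, coe_norm] at this
  rw [← this, ← s.sum_coe_sort]

theorem Submodule.inner_starProjection_of_mem (K : Submodule 𝕜 E) [K.HasOrthogonalProjection]
    {w : E} (hw : w ∈ K) (x : E) : ⟪w, K.starProjection x⟫_𝕜 = ⟪w, x⟫_𝕜 := by
  rw [← inner_starProjection_left_eq_right, starProjection_eq_self_iff.mpr hw]

theorem Orthonormal.sum_norm_inner_sq_le_of_mem_span [Fintype κ] {W : κ → E}
    (hW : Orthonormal 𝕜 W) {V : ι → E} (hV : Orthonormal 𝕜 V) {s : Finset ι}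
    (hWV : ∀ q, W q ∈ span 𝕜 (V '' s)) (x : E) :
    ∑ q, ‖⟪W q, x⟫_𝕜‖ ^ 2 ≤ ∑ j ∈ s, ‖⟪V j, x⟫_𝕜‖ ^ 2 := by
  set K := span 𝕜 (V '' s)
  have : FiniteDimensional 𝕜 K := .span_of_finite 𝕜 (s.finite_toSet.image V)
  have hP : ∀ w ∈ K, ⟪w, K.starProjection x⟫_𝕜 = ⟪w, x⟫_𝕜 := fun w hw =>
    K.inner_starProjection_of_mem hw x
  calc ∑ q, ‖⟪W q, x⟫_𝕜‖ ^ 2 = ∑ q, ‖⟪W q, K.starProjection x⟫_𝕜‖ ^ 2 := by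
        simp only [hP _ (hWV _)]
    _ ≤ ‖K.starProjection x‖ ^ 2 := hW.sum_inner_products_le _
    _ = ∑ j ∈ s, ‖⟪V j, K.starProjection x⟫_𝕜‖ ^ 2 :=
        (hV.sum_norm_inner_sq_of_mem_span (K.starProjection_apply_mem x)).symm
    _ = ∑ j ∈ s, ‖⟪V j, x⟫_𝕜‖ ^ 2 :=
        sum_congr rfl fun j hj => by rw [hP _ (subset_span (Set.mem_image_of_mem V hj))]

theorem Orthonormal.finrank_inf_span_le_sum_norm_inner_sq [Fintype κ] {U : κ → E}
    (hU : Orthonormal 𝕜 U) {V : ι → E} (hV : Orthonormal 𝕜 V) (s : Finset ι) :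
    (finrank 𝕜 ↥(span 𝕜 (Set.range U) ⊓ span 𝕜 (V '' s)) : ℝ)
      ≤ ∑ j ∈ s, ∑ p, ‖⟪V j, U p⟫_𝕜‖ ^ 2 := by
  set K := span 𝕜 (Set.range U) ⊓ span 𝕜 (V '' s)
  have : FiniteDimensional 𝕜 (span 𝕜 (Set.range U)) := .span_of_finite 𝕜 (Set.finite_range U)
  have : FiniteDimensional 𝕜 K := Submodule.finiteDimensional_of_le inf_le_left
  set B := stdOrthonormalBasis 𝕜 K
  set W : Fin (finrank 𝕜 K) → E := fun q => B q
  have hW : Orthonormal 𝕜 W := B.orthonormal.comp_linearIsometry K.subtypeₗᵢ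
  have hWU : ∀ q, W q ∈ span 𝕜 (U '' (univ : Finset κ)) := fun q => by
    simpa using (mem_inf.mp (B q).2).1
  calc (finrank 𝕜 K : ℝ) = ∑ q, ‖W q‖ ^ 2 := by simp [hW.1]
    _ = ∑ q, ∑ p, ‖⟪W q, U p⟫_𝕜‖ ^ 2 := by
        simp only [← hU.sum_norm_inner_sq_of_mem_span (hWU _), norm_inner_symm (U _)]
    _ = ∑ p, ∑ q, ‖⟪W q, U p⟫_𝕜‖ ^ 2 := sum_comm
    _ ≤ ∑ p, ∑ j ∈ s, ‖⟪V j, U p⟫_𝕜‖ ^ 2 := sum_le_sum fun p _ =>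
        hW.sum_norm_inner_sq_le_of_mem_span hV (fun q => (mem_inf.mp (B q).2).2) _
    _ = ∑ j ∈ s, ∑ p, ‖⟪V j, U p⟫_𝕜‖ ^ 2 := sum_comm

theorem OrthonormalBasis.re_inner_map_self_eq_sum [Fintype ι] (b : OrthonormalBasis ι 𝕜 E)
    {T : E →ₗ[𝕜] E} {α : ι → ℝ} (hT : ∀ j, T (b j) = (α j : 𝕜) • b j) (x : E) :
    RCLike.re ⟪x, T x⟫_𝕜 = ∑ j, α j * ‖⟪b j, x⟫_𝕜‖ ^ 2 := by
  have hTx : T x = ∑ j, ((α j : 𝕜) * ⟪b j, x⟫_𝕜) • b j := by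
    conv_lhs => rw [← b.sum_repr' x]
    simp only [map_sum, map_smul, hT, smul_smul, mul_comm]
  rw [hTx, inner_sum, map_sum]
  refine sum_congr rfl fun j _ => ?_
  rw [inner_smul_right, ← inner_conj_symm x, mul_assoc, RCLike.mul_conj]
  norm_cast

theorem OrthonormalBasis.sum_le_sum_re_inner_map_self_of_finrank_inf_span {n r : ℕ}
    (b : OrthonormalBasis (Fin n) 𝕜 E) {T : E →ₗ[𝕜] E} {α : Fin n → ℝ} (hα : Antitone α)
    (hT : ∀ j, T (b j) = (α j : 𝕜) • b j) {i : Fin r → Fin n} {U : Fin r → E}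
    (hU : Orthonormal 𝕜 U)
    (hSch : ∀ p : Fin r,
      p.val + 1 ≤ finrank 𝕜 ↥(span 𝕜 (Set.range U) ⊓ span 𝕜 (b '' Set.Iic (i p)))) :
    ∑ p, α (i p) ≤ ∑ p, RCLike.re ⟪U p, T (U p)⟫_𝕜 := by
  set t : Fin n → ℝ := fun j => ∑ p, ‖⟪b j, U p⟫_𝕜‖ ^ 2
  have htot : ∑ j, t j = r := by
    rw [sum_comm]
    simp [b.sum_sq_norm_inner_right, hU.1]
  have hpart : ∀ p : Fin r, (p + 1 : ℕ) ≤ ∑ j ∈ Iic (i p), t j := fun p => by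
    have := hU.finrank_inf_span_le_sum_norm_inner_sq b.orthonormal (Iic (i p))
    rw [coe_Iic] at this
    exact (Nat.cast_le.mpr (hSch p)).trans this
  calc ∑ p, α (i p) ≤ ∑ j, α j * t j :=
        sum_comp_le_sum_mul_of_antitone hα (fun j => sum_nonneg fun p _ => by positivity) htot hpart
    _ = ∑ p, RCLike.re ⟪U p, T (U p)⟫_𝕜 := by
        simp only [b.re_inner_map_self_eq_sum hT, t, mul_sum]
        exact sum_comm

theorem orthonormal_toLp_of_star_dotProduct [Fintype ι] [DecidableEq κ] {u : κ → ι → 𝕜}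
    (hu : ∀ p q, star (u p) ⬝ᵥ u q = if p = q then 1 else 0) :
    Orthonormal 𝕜 fun p => WithLp.toLp 2 (u p) :=
  orthonormal_iff_ite.mpr fun p q => by rw [EuclideanSpace.inner_toLp_toLp, dotProduct_comm, hu]

end InnerProductSpace

theorem rayleigh_trace_lower_bound_general {n r : ℕ}
    (A : Matrix (Fin n) (Fin n) ℂ)
    (α : Fin n → ℝ) (hαmono : Antitone α)
    (v : Fin n → (Fin n → ℂ))
    (hv : ∀ p q, star (v p) ⬝ᵥ v q = if p = q then 1 else 0)
    (heig : ∀ k, A.mulVec (v k) = (α k : ℂ) • v k)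
    (i : Fin r → Fin n)
    (L : Submodule ℂ (Fin n → ℂ))
    (hSch : ∀ p : Fin r, p.val + 1 ≤
      Module.finrank ℂ ↥(L ⊓ Submodule.span ℂ {x | ∃ j, j ≤ i p ∧ x = v j}))
    (u : Fin r → (Fin n → ℂ))
    (hu : ∀ p q, star (u p) ⬝ᵥ u q = if p = q then 1 else 0)
    (hspan : Submodule.span ℂ (Set.range u) = L) :
    ∑ p, α (i p) ≤ ∑ p, (star (u p) ⬝ᵥ A.mulVec (u p)).re := by
  have hV := orthonormal_toLp_of_star_dotProduct hv
  let b : OrthonormalBasis (Fin n) ℂ (EuclideanSpace ℂ (Fin n)) :=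
    .mk hV (hV.linearIndependent.span_eq_top_of_card_eq_finrank' (by simp)).ge
  have hSch' : ∀ p : Fin r, p.val + 1 ≤ finrank ℂ
      ↥(span ℂ (Set.range fun p => WithLp.toLp 2 (u p)) ⊓ span ℂ (b '' Set.Iic (i p))) := by
    intro p
    have hF : {x | ∃ j, j ≤ i p ∧ x = v j} = v '' Set.Iic (i p) := by ext; simp [eq_comm]
    have := hSch p
    rw [← hspan, hF, ← (WithLp.linearEquiv 2 ℂ (Fin n → ℂ)).symm.finrank_span_image_inf_span_image,
      ← Set.range_comp, ← Set.image_comp] at this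
    rwa [OrthonormalBasis.coe_mk]
  have := b.sum_le_sum_re_inner_map_self_of_finrank_inf_span hαmono (T := toEuclideanLin A)
    (fun j => by simp [b, heig]) (orthonormal_toLp_of_star_dotProduct hu) hSch'
  simpa [EuclideanSpace.inner_toLp_toLp, dotProduct_comm] using this

/-- Rayleigh trace lower bound (Hersch–Zwahlen): if `A` is Hermitian with
eigenvalues `α₁ ≥ … ≥ αₙ` and orthonormal eigenvectors `v₁,…,vₙ`,
`F_k = span(v₁,…,v_k)`, and `L` is an `r`-dimensional subspace with
`dim (L ⊓ F_{i_p}) ≥ p` for all `p` (where `i₁ < … < i_r`), then for any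
orthonormal basis `u₁,…,u_r` of `L` one has
`∑_p α_{i_p} ≤ ∑_p ⟨A u_p, u_p⟩`. -/
theorem rayleigh_trace_lower_bound {n r : ℕ}
    (A : Matrix (Fin n) (Fin n) ℂ) (hA : A.IsHermitian)
    (α : Fin n → ℝ) (hαmono : Antitone α)
    (v : Fin n → (Fin n → ℂ))
    (hv : ∀ p q, star (v p) ⬝ᵥ v q = if p = q then 1 else 0)
    (heig : ∀ k, A.mulVec (v k) = (α k : ℂ) • v k)
    (i : Fin r → Fin n) (hi : StrictMono i)
    (L : Submodule ℂ (Fin n → ℂ)) (hL : Module.finrank ℂ L = r)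
    (hSch : ∀ p : Fin r, p.val + 1 ≤
      Module.finrank ℂ ↥(L ⊓ Submodule.span ℂ {x | ∃ j, j ≤ i p ∧ x = v j}))
    (u : Fin r → (Fin n → ℂ))
    (hu : ∀ p q, star (u p) ⬝ᵥ u q = if p = q then 1 else 0)
    (huL : ∀ p, u p ∈ L)
    (hspan : Submodule.span ℂ (Set.range u) = L) :
    ∑ p, α (i p) ≤ ∑ p, (star (u p) ⬝ᵥ A.mulVec (u p)).re :=
  rayleigh_trace_lower_bound_general A α hαmono v hv heig i L hSch u hu hspan
end

section
/- There exist 3×3 complex matrices A, B with singular values (1,1,0) and (1,1,0) respectively such that C = A + B has singular values (1,1,1), but no such real 3×3 matrices A, B exist. -/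
/-!
Over `ℂ`, the diagonal example works because `|ζ| = 1` and `ζ + ζ⁻¹ = 1`.

Over `ℝ`, `C = A + B` is orthogonal; put `D = Cᵀ B`, so that `1 - D = Cᵀ A`. Then `Dᵀ D = Bᵀ B`
and `(1 - D)ᵀ (1 - D) = Aᵀ A` are projections of trace `2`, and `D`, `1 - D` are both singular.
Since `tr Dᵀ = tr D` (over `ℂ` only the real part of `tr D` would be pinned down), expanding
`(1 - D)ᵀ (1 - D)` gives `tr D = 3/2`, and the partial-isometry identities `D Dᵀ D = D`,
`(1 - D)(1 - D)ᵀ(1 - D) = 1 - D` give `tr D² = 1/2`. For a `3 × 3` matrix,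
`2 det (1 - D) = 2 - 2 tr D + (tr D)² - tr D² - 2 det D`, which then equals `3/4 ≠ 0`.
-/

open Matrix Polynomial

theorem Fintype.exists_perm_comp_eq_of_map_univ_eq {ι α : Type*} [Fintype ι] [DecidableEq α]
    {f g : ι → α} (h : Multiset.map f Finset.univ.val = Multiset.map g Finset.univ.val) :
    ∃ σ : Equiv.Perm ι, ∀ i, f (σ i) = g i := by
  have hcard : ∀ c, Fintype.card {i // g i = c} = Fintype.card {i // f i = c} := fun c => by
    have := congrArg (Multiset.count c) h.symm
    rw [Multiset.count_map, Multiset.count_map] at this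
    simpa [Fintype.card_subtype, Finset.card_def, Finset.filter_val, eq_comm] using this
  exact ⟨Equiv.ofFiberEquiv fun c => Fintype.equivOfCardEq (hcard c),
    Equiv.ofFiberEquiv_map _⟩

theorem IsPrimitiveRoot.add_inv_eq_one {K : Type*} [Field K] {ζ : K} (hζ : IsPrimitiveRoot ζ 6) :
    ζ + ζ⁻¹ = 1 := by
  have hroot : ζ ^ 2 - ζ + 1 = 0 := by
    simpa [cyclotomic_six] using hζ.isRoot_cyclotomic (by norm_num)
  have hζ0 : ζ ≠ 0 := hζ.ne_zero (by norm_num)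
  field_simp
  linear_combination hroot

namespace Matrix

theorem two_mul_det_one_sub_fin_three {R : Type*} [CommRing R] (M : Matrix (Fin 3) (Fin 3) R) :
    2 * (1 - M).det = 2 - 2 * M.trace + M.trace ^ 2 - (M * M).trace - 2 * M.det := by
  simp only [det_fin_three, trace_fin_three, mul_apply, Fin.sum_univ_three, sub_apply,
    one_apply_eq, one_apply_ne, ne_eq, Fin.reduceEq, not_false_eq_true]
  ring

theorem conjTranspose_mul_self_conjTranspose_mul {R m n : Type*} [Fintype m] [DecidableEq m]
    [Fintype n] [Semiring R] [StarRing R] {C : Matrix m m R} (hC : C * Cᴴ = 1)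
    (X : Matrix m n R) : (Cᴴ * X)ᴴ * (Cᴴ * X) = Xᴴ * X := by
  rw [conjTranspose_mul, conjTranspose_conjTranspose, Matrix.mul_assoc, ← Matrix.mul_assoc C,
    hC, Matrix.one_mul]

section RCLike

variable {𝕜 : Type*} [RCLike 𝕜]

open scoped ComplexOrder in
theorem mul_conjTranspose_mul_self_of_isIdempotentElem {m n : Type*} [Fintype m] [Fintype n]
    {X : Matrix m n 𝕜} (hX : IsIdempotentElem (Xᴴ * X)) : X * (Xᴴ * X) = X := by
  have hP : (Xᴴ * X)ᴴ = Xᴴ * X := (isHermitian_conjTranspose_mul_self X).eq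
  have hsq : (X * (Xᴴ * X) - X)ᴴ * (X * (Xᴴ * X) - X) = 0 := by
    rw [conjTranspose_sub, conjTranspose_mul, hP]
    calc (Xᴴ * X * Xᴴ - Xᴴ) * (X * (Xᴴ * X) - X)
        = (Xᴴ * X) * (Xᴴ * X) * (Xᴴ * X) - (Xᴴ * X) * (Xᴴ * X) - (Xᴴ * X) * (Xᴴ * X)
            + Xᴴ * X := by
          simp only [Matrix.sub_mul, Matrix.mul_sub, Matrix.mul_assoc]; abel
      _ = 0 := by rw [hX.eq, hX.eq]; abel
  exact sub_eq_zero.mp (conjTranspose_mul_self_eq_zero.mp hsq)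

namespace IsHermitian

variable {n : Type*} [Fintype n] [DecidableEq n] {N : Matrix n n 𝕜}

theorem exists_perm_eigenvalues_eq_of_eq_diagonal (hN : N.IsHermitian) {d : n → ℝ}
    (hd : N = diagonal fun i => (d i : 𝕜)) :
    ∃ σ : Equiv.Perm n, ∀ i, hN.eigenvalues (σ i) = d i := by
  subst hd
  apply Fintype.exists_perm_comp_eq_of_map_univ_eq
  apply Multiset.map_injective (RCLike.ofReal_injective (K := 𝕜))
  have := hN.roots_charpoly_eq_eigenvalues
  rw [charpoly_diagonal,
    roots_prod _ _ (by simp [Finset.prod_ne_zero_iff, X_sub_C_ne_zero])] at this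
  simpa [Multiset.map_map] using this.symm

theorem isIdempotentElem_of_eigenvalues (hN : N.IsHermitian)
    (h : ∀ i, IsIdempotentElem (hN.eigenvalues i)) : IsIdempotentElem N := by
  rw [hN.spectral_theorem]
  refine IsIdempotentElem.map ?_ _
  simp only [IsIdempotentElem, diagonal_mul_diagonal, Function.comp_apply, ← RCLike.ofReal_mul,
    fun i => (h i).eq]
  rfl

theorem eq_one_of_eigenvalues (hN : N.IsHermitian) (h : ∀ i, hN.eigenvalues i = 1) : N = 1 := by
  rw [hN.spectral_theorem]
  convert map_one (Unitary.conjStarAlgAut 𝕜 (Matrix n n 𝕜) hN.eigenvectorUnitary)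
  simp [Function.comp_def, h]

end IsHermitian

end RCLike

section Real

variable {n : Type*} [Fintype n] [DecidableEq n]

theorem trace_conjTranspose_mul_self_one_sub (D : Matrix n n ℝ) :
    ((1 - D)ᴴ * (1 - D)).trace = Fintype.card n - 2 * D.trace + (Dᴴ * D).trace := by
  have hexp : (1 - D)ᴴ * (1 - D) = 1 - D - Dᴴ + Dᴴ * D := by
    simp only [conjTranspose_sub, conjTranspose_one]
    noncomm_ring
  rw [hexp, trace_add, trace_sub, trace_sub, trace_one, trace_conjTranspose, star_trivial]
  ring

theorem two_mul_trace_mul_self_of_isIdempotentElem {D : Matrix n n ℝ}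
    (hQ : IsIdempotentElem (Dᴴ * D)) (hP : IsIdempotentElem ((1 - D)ᴴ * (1 - D))) :
    2 * (D * D).trace =
      3 * Fintype.card n - 3 * ((1 - D)ᴴ * (1 - D)).trace - (Dᴴ * D).trace := by
  set P := (1 - D)ᴴ * (1 - D)
  have hD : D * (Dᴴ * D) = D := mul_conjTranspose_mul_self_of_isIdempotentElem hQ
  have hE : (1 - D) * P = 1 - D := mul_conjTranspose_mul_self_of_isIdempotentElem hP
  have hkey : D * D + D * Dᴴ = 2 • D - D * P := by
    -- left multiplication by `D` of `D + Dᴴ = 1 + Dᴴ * D - P`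
    have : D * D + D * Dᴴ = D + D * (Dᴴ * D) - D * P := by
      simp only [P, conjTranspose_sub, conjTranspose_one]
      noncomm_ring
    rw [this, hD, two_nsmul]
  have htrE := congrArg trace hE
  have htrkey := congrArg trace hkey
  rw [Matrix.sub_mul, Matrix.one_mul, trace_sub, trace_sub, trace_one] at htrE
  rw [trace_add, trace_sub, trace_smul, trace_mul_comm D Dᴴ, two_nsmul] at htrkey
  have htr := trace_conjTranspose_mul_self_one_sub D
  linarith

theorem det_one_sub_ne_zero_of_isIdempotentElem {D : Matrix (Fin 3) (Fin 3) ℝ}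
    (hQ : IsIdempotentElem (Dᴴ * D)) (hQtr : (Dᴴ * D).trace = 2)
    (hP : IsIdempotentElem ((1 - D)ᴴ * (1 - D))) (hPtr : ((1 - D)ᴴ * (1 - D)).trace = 2)
    (hD : D.det = 0) : (1 - D).det ≠ 0 := by
  have htr : D.trace = 3 / 2 := by
    have := trace_conjTranspose_mul_self_one_sub D
    rw [hQtr, hPtr, Fintype.card_fin, Nat.cast_ofNat] at this
    linarith
  have htr2 : (D * D).trace = 1 / 2 := by
    have := two_mul_trace_mul_self_of_isIdempotentElem hQ hP
    rw [hQtr, hPtr, Fintype.card_fin, Nat.cast_ofNat] at this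
    linarith
  have hdet := two_mul_det_one_sub_fin_three D
  rw [htr, htr2, hD] at hdet
  intro h
  rw [h] at hdet
  norm_num at hdet

end Real

end Matrix

/-- `s` lists the singular values (with multiplicity, in some order) of the
complex matrix `M`: the eigenvalues of `Mᴴ * M` are the squares `s i ^ 2`. -/
def HasSingularValuesC (M : Matrix (Fin 3) (Fin 3) ℂ) (s : Fin 3 → ℝ) : Prop :=
  ∃ (h : (Mᴴ * M).IsHermitian) (σ : Equiv.Perm (Fin 3)),
    ∀ i, h.eigenvalues (σ i) = (s i) ^ 2

/-- `s` lists the singular values (with multiplicity, in some order) of the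
real matrix `M`: the eigenvalues of `Mᴴ * M = Mᵀ * M` are the squares. -/
def HasSingularValuesR (M : Matrix (Fin 3) (Fin 3) ℝ) (s : Fin 3 → ℝ) : Prop :=
  ∃ (h : (Mᴴ * M).IsHermitian) (σ : Equiv.Perm (Fin 3)),
    ∀ i, h.eigenvalues (σ i) = (s i) ^ 2

theorem hasSingularValuesC_diagonal (a : Fin 3 → ℂ) :
    HasSingularValuesC (diagonal a) fun i => ‖a i‖ := by
  have hgram : (diagonal a)ᴴ * diagonal a = diagonal fun i => ((‖a i‖ ^ 2 : ℝ) : ℂ) := by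
    rw [diagonal_conjTranspose, diagonal_mul_diagonal]
    simp [Complex.conj_mul']
  have h := isHermitian_conjTranspose_mul_self (diagonal a)
  exact ⟨h, h.exists_perm_eigenvalues_eq_of_eq_diagonal hgram⟩

theorem HasSingularValuesC.comp_perm {M : Matrix (Fin 3) (Fin 3) ℂ} {s : Fin 3 → ℝ}
    (h : HasSingularValuesC M s) (τ : Equiv.Perm (Fin 3)) : HasSingularValuesC M (s ∘ τ) := by
  obtain ⟨h, σ, hσ⟩ := h
  exact ⟨h, σ * τ, fun i => hσ (τ i)⟩

theorem hasSingularValuesR_congr {M M' : Matrix (Fin 3) (Fin 3) ℝ} {s : Fin 3 → ℝ}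
    (h : M'ᴴ * M' = Mᴴ * M) : HasSingularValuesR M' s ↔ HasSingularValuesR M s := by
  unfold HasSingularValuesR
  rw [h]

namespace HasSingularValuesR

variable {M : Matrix (Fin 3) (Fin 3) ℝ} {s : Fin 3 → ℝ}

theorem exists_eigenvalues_eq (h : HasSingularValuesR M s) :
    ∃ h : (Mᴴ * M).IsHermitian, ∀ j, ∃ i, h.eigenvalues j = s i ^ 2 := by
  obtain ⟨h, σ, hσ⟩ := h
  exact ⟨h, fun j => ⟨σ.symm j, by rw [← hσ, Equiv.apply_symm_apply]⟩⟩

theorem trace_eq (h : HasSingularValuesR M s) : (Mᴴ * M).trace = ∑ i, s i ^ 2 := by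
  obtain ⟨h, σ, hσ⟩ := h
  rw [h.trace_eq_sum_eigenvalues, ← Equiv.sum_comp σ]
  exact Finset.sum_congr rfl fun i _ => hσ i

theorem det_sq_eq (h : HasSingularValuesR M s) : M.det ^ 2 = ∏ i, s i ^ 2 := by
  obtain ⟨h, σ, hσ⟩ := h
  have := h.det_eq_prod_eigenvalues
  rw [← Equiv.prod_comp σ, det_mul, det_conjTranspose, star_trivial] at this
  rw [sq, this]
  exact Finset.prod_congr rfl fun i _ => hσ i

theorem isIdempotentElem (h : HasSingularValuesR M s) (hs : ∀ i, IsIdempotentElem (s i ^ 2)) :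
    IsIdempotentElem (Mᴴ * M) := by
  obtain ⟨h, he⟩ := h.exists_eigenvalues_eq
  exact h.isIdempotentElem_of_eigenvalues fun j => by
    obtain ⟨i, hi⟩ := he j
    exact hi ▸ hs i

theorem conjTranspose_mul_self_eq_one (h : HasSingularValuesR M s) (hs : ∀ i, s i ^ 2 = 1) :
    Mᴴ * M = 1 := by
  obtain ⟨h, he⟩ := h.exists_eigenvalues_eq
  exact h.eq_one_of_eigenvalues fun j => by
    obtain ⟨i, hi⟩ := he j
    exact hi ▸ hs i

theorem not_one_sub {D : Matrix (Fin 3) (Fin 3) ℝ} (hD : HasSingularValuesR D ![1, 1, 0]) :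
    ¬ HasSingularValuesR (1 - D) ![1, 1, 0] := by
  have key : ∀ {M : Matrix (Fin 3) (Fin 3) ℝ}, HasSingularValuesR M ![1, 1, 0] →
      IsIdempotentElem (Mᴴ * M) ∧ (Mᴴ * M).trace = 2 ∧ M.det = 0 := fun h =>
    ⟨h.isIdempotentElem fun i => by fin_cases i <;> simp [IsIdempotentElem],
      by rw [h.trace_eq]; simp [Fin.sum_univ_three, one_add_one_eq_two],
      pow_eq_zero_iff two_ne_zero |>.mp (by simp [h.det_sq_eq, Fin.prod_univ_three])⟩
  intro h1D
  obtain ⟨hQ, hQtr, hdet⟩ := key hD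
  obtain ⟨hP, hPtr, hdet1⟩ := key h1D
  exact det_one_sub_ne_zero_of_isIdempotentElem hQ hQtr hP hPtr hdet hdet1

end HasSingularValuesR

/-- There exist `3×3` complex matrices `A`, `B` with singular values `(1,1,0)`
and `(1,1,0)` such that `A + B` has singular values `(1,1,1)`, but no such
real `3×3` matrices exist. -/
theorem complex_but_not_real_singular_values :
    (∃ A B : Matrix (Fin 3) (Fin 3) ℂ,
      HasSingularValuesC A ![1, 1, 0] ∧ HasSingularValuesC B ![1, 1, 0] ∧
        HasSingularValuesC (A + B) ![1, 1, 1]) ∧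
    ¬ (∃ A B : Matrix (Fin 3) (Fin 3) ℝ,
      HasSingularValuesR A ![1, 1, 0] ∧ HasSingularValuesR B ![1, 1, 0] ∧
        HasSingularValuesR (A + B) ![1, 1, 1]) := by
  refine ⟨?_, ?_⟩
  · obtain ⟨ζ, hζ⟩ : ∃ ζ : ℂ, IsPrimitiveRoot ζ 6 :=
      ⟨_, Complex.isPrimitiveRoot_exp 6 (by norm_num)⟩
    have hnorm : ‖ζ‖ = 1 := hζ.norm'_eq_one (by norm_num)
    refine ⟨diagonal ![1, ζ, 0], diagonal ![0, ζ⁻¹, 1], ?_, ?_, ?_⟩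
    · convert hasSingularValuesC_diagonal ![1, ζ, 0] using 1
      funext i; fin_cases i <;> simp [hnorm]
    · convert (hasSingularValuesC_diagonal ![0, ζ⁻¹, 1]).comp_perm (Equiv.swap 0 2) using 1
      funext i; fin_cases i <;> simp [hnorm, Equiv.swap_apply_of_ne_of_ne]
    · rw [diagonal_add]
      convert hasSingularValuesC_diagonal _ using 1
      funext i; fin_cases i <;> simp [hζ.add_inv_eq_one]
  · rintro ⟨A, B, hA, hB, hC⟩
    have hCC : (A + B)ᴴ * (A + B) = 1 :=
      hC.conjTranspose_mul_self_eq_one fun i => by fin_cases i <;> simp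
    have hCC' : (A + B) * (A + B)ᴴ = 1 := mul_eq_one_comm.mp hCC
    have h1D : 1 - (A + B)ᴴ * B = (A + B)ᴴ * A := by
      rw [← hCC, Matrix.mul_add, add_sub_cancel_right]
    refine HasSingularValuesR.not_one_sub
      ((hasSingularValuesR_congr (conjTranspose_mul_self_conjTranspose_mul hCC' B)).mpr hB) ?_
    rwa [h1D, hasSingularValuesR_congr (conjTranspose_mul_self_conjTranspose_mul hCC' A)]
end

section
/- (Multiplicative determinant bound) Let A be a positive semidefinite Hermitian n×n matrix with eigenvalues α₁ ≥ … ≥ αₙ ≥ 0 and orthonormal eigenbasis v₁,…,vₙ with flag F_k = span(v₁,…,v_k). Let I = {i₁ < … < i_r} and let L be an r-dimensional subspace with dim(L ∩ F_{i_p}) ≥ p for all p. Then det(⟨A u_i, u_j⟩)_{1≤i,j≤r} ≥ ∏_{p=1}^r α_{i_p} for any orthonormal basis u₁,…,u_r of L, with equality for L = span(v_{i₁},…,v_{i_r}). -/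
open Matrix BigOperators
open scoped ComplexOrder

/-!
Pick greedily an orthonormal basis `w` of `L` with `w p ∈ L ⊓ F_{i p}`: as
`dim (L ⊓ F_{i p}) ≥ p + 1`, that subspace contains a unit vector orthogonal to `w 0, …, w (p-1)`.
The determinant of the compression of `A` is the same in all orthonormal bases of `L`. In the
basis `w` the compression `B` satisfies `α (i p) ‖z‖² ≤ re ⟪z, B z⟫` for every `z` supported on
`{0, …, p}`, because `∑ z q • w q` lies in `F_{i p}`, where `A ≥ α (i p)`. The LDL decomposition
of `B` (Gram–Schmidt for the form of `B`) writes `det B` as the product over `p` of `⟪z_p, B z_p⟫`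
for vectors `z_p` supported on `{0, …, p}` with `z_p p = 1`, and each factor is at least
`α (i p) ‖z_p‖² ≥ α (i p)`.
-/

namespace LDL

variable {𝕜 : Type*} [RCLike 𝕜] {ι : Type*} [LinearOrder ι] [Fintype ι]
  [LocallyFiniteOrderBot ι] {S : Matrix ι ι 𝕜} (hS : S.PosDef)

lemma diagEntries_eq_star_dotProduct_mulVec (p : ι) :
    diagEntries hS p = star (star (lowerInv hS p)) ⬝ᵥ S *ᵥ star (lowerInv hS p) := by
  simp only [diagEntries, EuclideanSpace.inner_toLp_toLp, star_star, dotProduct_comm]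

lemma star_lowerInv_eq_zero {p q : ι} (hpq : p < q) : star (lowerInv hS p) q = 0 := by
  simp [lowerInv_triangular hS hpq]

lemma det_lowerInv : (lowerInv hS).det = ∏ p, lowerInv hS p p :=
  det_of_isLowerTriangular _ fun _ _ hpq => lowerInv_triangular hS hpq

-- `lowerInv hS` need not have a unit diagonal, whence the factor `∏ p, ‖lowerInv hS p p‖ ^ 2`.
lemma prod_re_diagEntries :
    ∏ p, RCLike.re (diagEntries hS p) = (∏ p, ‖lowerInv hS p p‖ ^ 2) * RCLike.re S.det := by
  have hdet : ∏ p, diagEntries hS p = ((∏ p, ‖lowerInv hS p p‖ ^ 2 : ℝ) : 𝕜) * S.det := by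
    rw [← det_diagonal, ← diag, diag_eq_lowerInv_conj, det_mul, det_mul, det_conjTranspose,
      mul_comm (lowerInv hS).det, mul_assoc, RCLike.star_def, RCLike.mul_conj, det_lowerInv,
      norm_prod]
    simp [Finset.prod_pow, mul_comm]
  have hreal : ∀ p, diagEntries hS p = (RCLike.re (diagEntries hS p) : 𝕜) := fun p =>
    (RCLike.conj_eq_iff_re.mp (RCLike.conj_eq_iff_im.mpr (by
      rw [diagEntries_eq_star_dotProduct_mulVec]
      exact hS.isHermitian.im_star_dotProduct_mulVec_self _))).symm
  have hprod : ∏ p, diagEntries hS p = ((∏ p, RCLike.re (diagEntries hS p) : ℝ) : 𝕜) := by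
    rw [RCLike.ofReal_prod]
    exact Finset.prod_congr rfl fun p _ => hreal p
  rw [← RCLike.re_ofReal_mul, ← hdet, hprod, RCLike.ofReal_re]

lemma prod_norm_sq_lowerInv_pos : 0 < ∏ p, ‖lowerInv hS p p‖ ^ 2 := by
  have hM := (isUnit_det_of_invertible (lowerInv hS)).ne_zero
  rw [det_lowerInv, Finset.prod_ne_zero_iff] at hM
  exact Finset.prod_pos fun p _ => pow_pos (norm_pos_iff.mpr (hM p (Finset.mem_univ p))) 2

end LDL

namespace Matrix

variable {𝕜 : Type*} [RCLike 𝕜]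

lemma re_star_dotProduct_self {m : Type*} [Fintype m] (z : m → 𝕜) :
    RCLike.re (star z ⬝ᵥ z) = ∑ j, ‖z j‖ ^ 2 := by
  simp [dotProduct, RCLike.conj_mul]

section TriangularBound

variable {ι : Type*} [LinearOrder ι] [Fintype ι] [LocallyFiniteOrderBot ι]

theorem prod_le_re_det_of_posDef {S : Matrix ι ι 𝕜} (hS : S.PosDef) {β : ι → ℝ}
    (hβ : ∀ p, 0 ≤ β p)
    (hbound : ∀ p (z : ι → 𝕜), (∀ q, p < q → z q = 0) →
      β p * RCLike.re (star z ⬝ᵥ z) ≤ RCLike.re (star z ⬝ᵥ S *ᵥ z)) :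
    ∏ p, β p ≤ RCLike.re S.det := by
  set M := LDL.lowerInv hS
  have hpivot : ∀ p, β p * ‖M p p‖ ^ 2 ≤ RCLike.re (LDL.diagEntries hS p) := fun p =>
    calc β p * ‖M p p‖ ^ 2 ≤ β p * RCLike.re (star (star (M p)) ⬝ᵥ star (M p)) := by
          gcongr
          · exact hβ p
          rw [re_star_dotProduct_self]
          simpa using Finset.single_le_sum (f := fun q => ‖M p q‖ ^ 2)
            (fun q _ => by positivity) (Finset.mem_univ p)
      _ ≤ RCLike.re (LDL.diagEntries hS p) := by
          rw [LDL.diagEntries_eq_star_dotProduct_mulVec]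
          exact hbound p _ fun q => LDL.star_lowerInv_eq_zero hS
  have hle : ∏ p, (β p * ‖M p p‖ ^ 2) ≤ ∏ p, RCLike.re (LDL.diagEntries hS p) :=
    Finset.prod_le_prod (fun p _ => mul_nonneg (hβ p) (by positivity)) fun p _ => hpivot p
  rw [Finset.prod_mul_distrib, LDL.prod_re_diagEntries, mul_comm _ (RCLike.re S.det)] at hle
  exact le_of_mul_le_mul_right hle (LDL.prod_norm_sq_lowerInv_pos hS)

theorem prod_le_re_det_of_posSemidef {S : Matrix ι ι 𝕜} (hS : S.PosSemidef) {β : ι → ℝ}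
    (hβ : ∀ p, 0 ≤ β p)
    (hbound : ∀ p (z : ι → 𝕜), (∀ q, p < q → z q = 0) →
      β p * RCLike.re (star z ⬝ᵥ z) ≤ RCLike.re (star z ⬝ᵥ S *ᵥ z)) :
    ∏ p, β p ≤ RCLike.re S.det := by
  by_cases hpos : ∀ p, 0 < β p
  · refine prod_le_re_det_of_posDef
      (.of_dotProduct_mulVec_pos hS.isHermitian fun x hx => ?_) hβ hbound
    obtain ⟨j, -⟩ := Function.ne_iff.mp hx
    set top := Finset.univ.max' ⟨j, Finset.mem_univ j⟩
    have hx_top := hbound top x fun q hq =>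
      absurd (Finset.le_max' _ q (Finset.mem_univ q)) hq.not_ge
    have hx_pos : 0 < RCLike.re (star x ⬝ᵥ x) :=
      (RCLike.pos_iff.mp (dotProduct_star_self_pos_iff.mpr hx)).1
    exact RCLike.pos_iff.mpr ⟨(mul_pos (hpos top) hx_pos).trans_le hx_top,
      hS.isHermitian.im_star_dotProduct_mulVec_self x⟩
  · obtain ⟨p, hp⟩ := not_forall.mp hpos
    rw [Finset.prod_eq_zero (Finset.mem_univ p) (le_antisymm (not_lt.mp hp) (hβ p))]
    exact (RCLike.nonneg_iff.mp hS.det_nonneg).1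

end TriangularBound

section Compression

variable {m ι : Type*}

lemma exists_mulVec_eq_of_mem_span_le [LinearOrder ι] [Fintype ι] {v : ι → m → 𝕜} {k : ι}
    {y : m → 𝕜} (hy : y ∈ Submodule.span 𝕜 {x | ∃ j, j ≤ k ∧ x = v j}) :
    ∃ c : ι → 𝕜, (∀ j, k < j → c j = 0) ∧ (of v)ᵀ *ᵥ c = y := by
  rw [show {x | ∃ j, j ≤ k ∧ x = v j} = v '' Set.Iic k by ext; simp [eq_comm],
    Finsupp.mem_span_image_iff_linearCombination] at hy
  obtain ⟨l, hl, rfl⟩ := hy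
  refine ⟨l, fun j hj => ?_, ?_⟩
  · by_contra h
    exact hj.not_ge (hl (Finsupp.mem_support_iff.mpr h))
  · rw [mulVec_transpose, vecMul_eq_sum, Finsupp.linearCombination_apply, Finsupp.sum_fintype]
    · rfl
    · simp

variable [Fintype m]

def compression (A : Matrix m m 𝕜) (u : ι → m → 𝕜) : Matrix ι ι 𝕜 :=
  of fun p q => star (u p) ⬝ᵥ A *ᵥ u q

lemma compression_eq_conjTranspose_mul_mul (A : Matrix m m 𝕜) (u : ι → m → 𝕜) :
    compression A u = ((of u)ᵀ)ᴴ * A * (of u)ᵀ := by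
  ext p q
  simp only [compression, of_apply, mul_apply, conjTranspose_apply, transpose_apply, dotProduct,
    mulVec, Pi.star_apply, Finset.sum_mul, Finset.mul_sum]
  rw [Finset.sum_comm]
  exact Finset.sum_congr rfl fun j _ => Finset.sum_congr rfl fun k _ => by ring

lemma star_dotProduct_compression_mulVec [Fintype ι] (A : Matrix m m 𝕜) (u : ι → m → 𝕜)
    (z : ι → 𝕜) :
    star z ⬝ᵥ compression A u *ᵥ z = star ((of u)ᵀ *ᵥ z) ⬝ᵥ A *ᵥ ((of u)ᵀ *ᵥ z) := by
  rw [compression_eq_conjTranspose_mul_mul, ← mulVec_mulVec, ← mulVec_mulVec, dotProduct_mulVec,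
    star_mulVec]

section Orthonormal

variable [DecidableEq ι] {u : ι → m → 𝕜}

lemma conjTranspose_mul_self_eq_one (hu : ∀ p q, star (u p) ⬝ᵥ u q = if p = q then 1 else 0) :
    ((of u)ᵀ)ᴴ * (of u)ᵀ = 1 := by
  ext p q
  rw [one_apply, ← hu p q]
  simp [mul_apply, dotProduct]

lemma star_mulVec_dotProduct_mulVec_of_orthonormal [Fintype ι]
    (hu : ∀ p q, star (u p) ⬝ᵥ u q = if p = q then 1 else 0) (z : ι → 𝕜) :
    star ((of u)ᵀ *ᵥ z) ⬝ᵥ (of u)ᵀ *ᵥ z = star z ⬝ᵥ z := by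
  rw [star_mulVec, ← dotProduct_mulVec, mulVec_mulVec, conjTranspose_mul_self_eq_one hu,
    one_mulVec]

lemma compression_eq_diagonal {A : Matrix m m 𝕜} {α : ι → ℝ}
    (hu : ∀ p q, star (u p) ⬝ᵥ u q = if p = q then 1 else 0)
    (heig : ∀ k, A *ᵥ u k = (α k : 𝕜) • u k) :
    compression A u = diagonal fun p => (α p : 𝕜) := by
  ext p q
  rw [compression, of_apply, heig, dotProduct_smul, hu, diagonal_apply]
  split_ifs with h <;> simp [h]

lemma det_compression_eq_of_mem_span [Fintype ι] (A : Matrix m m 𝕜) {w : ι → m → 𝕜}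
    (hu : ∀ p q, star (u p) ⬝ᵥ u q = if p = q then 1 else 0)
    (hw : ∀ p q, star (w p) ⬝ᵥ w q = if p = q then 1 else 0)
    (hwu : ∀ p, w p ∈ Submodule.span 𝕜 (Set.range u)) :
    (compression A w).det = (compression A u).det := by
  set U := (of u)ᵀ
  have hUU : Uᴴ * U = 1 := conjTranspose_mul_self_eq_one hu
  obtain ⟨T, hUT⟩ : ∃ T : Matrix ι ι 𝕜, U * T = (of w)ᵀ := by
    refine ⟨Uᴴ * (of w)ᵀ, ?_⟩
    ext j q
    obtain ⟨c, hc⟩ : w q ∈ LinearMap.range U.mulVecLin := by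
      rw [range_mulVecLin]; exact hwu q
    have hq : (U * Uᴴ) *ᵥ w q = w q := by
      rw [← hc, mulVecLin_apply, mulVec_mulVec, Matrix.mul_assoc, hUU, Matrix.mul_one]
    rw [← Matrix.mul_assoc]
    exact congrFun hq j
  have hTT : Tᴴ * T = 1 := by
    rw [← conjTranspose_mul_self_eq_one hw, ← hUT, conjTranspose_mul, Matrix.mul_assoc,
      ← Matrix.mul_assoc Uᴴ, hUU, Matrix.one_mul]
  rw [compression_eq_conjTranspose_mul_mul, compression_eq_conjTranspose_mul_mul, ← hUT,
    show (U * T)ᴴ * A * (U * T) = Tᴴ * (Uᴴ * A * U) * T by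
      simp only [conjTranspose_mul, Matrix.mul_assoc]]
  calc (Tᴴ * (Uᴴ * A * U) * T).det = (Tᴴ * T).det * (Uᴴ * A * U).det := by
        simp only [det_mul]; ring
    _ = (Uᴴ * A * U).det := by rw [hTT, det_one, one_mul]

end Orthonormal

lemma re_star_dotProduct_diagonal_mulVec [Fintype ι] [DecidableEq ι] (α : ι → ℝ) (c : ι → 𝕜) :
    RCLike.re (star c ⬝ᵥ diagonal (fun j => (α j : 𝕜)) *ᵥ c) = ∑ j, α j * ‖c j‖ ^ 2 := by
  simp [dotProduct, mulVec_diagonal, mul_left_comm _ (α _ : 𝕜), RCLike.conj_mul]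

theorem mul_re_le_of_mem_span_eigenvectors [LinearOrder ι] [Fintype ι]
    {A : Matrix m m 𝕜} {v : ι → m → 𝕜} {α : ι → ℝ} (hα : Antitone α)
    (hv : ∀ p q, star (v p) ⬝ᵥ v q = if p = q then 1 else 0)
    (heig : ∀ k, A *ᵥ v k = (α k : 𝕜) • v k) {k : ι} {y : m → 𝕜}
    (hy : y ∈ Submodule.span 𝕜 {x | ∃ j, j ≤ k ∧ x = v j}) :
    α k * RCLike.re (star y ⬝ᵥ y) ≤ RCLike.re (star y ⬝ᵥ A *ᵥ y) := by
  obtain ⟨c, hc, rfl⟩ := exists_mulVec_eq_of_mem_span_le hy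
  rw [star_mulVec_dotProduct_mulVec_of_orthonormal hv, ← star_dotProduct_compression_mulVec,
    compression_eq_diagonal hv heig, re_star_dotProduct_diagonal_mulVec, re_star_dotProduct_self,
    Finset.mul_sum]
  refine Finset.sum_le_sum fun j _ => ?_
  rcases le_or_gt j k with hjk | hkj
  · exact mul_le_mul_of_nonneg_right (hα hjk) (sq_nonneg _)
  · simp [hc j hkj]

lemma exists_smul_star_dotProduct_self_eq_one {x : m → 𝕜} (hx : x ≠ 0) :
    ∃ c : 𝕜, star (c • x) ⬝ᵥ c • x = 1 := by
  have hn : (‖WithLp.toLp 2 x‖ : 𝕜) ≠ 0 := by simpa using hx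
  have hxx : star x ⬝ᵥ x = (‖WithLp.toLp 2 x‖ : 𝕜) ^ 2 := by
    rw [dotProduct_comm, ← EuclideanSpace.inner_toLp_toLp, inner_self_eq_norm_sq_to_K]
  refine ⟨(‖WithLp.toLp 2 x‖ : 𝕜)⁻¹, ?_⟩
  rw [star_smul, smul_dotProduct, dotProduct_smul, hxx, smul_eq_mul, smul_eq_mul, star_inv₀,
    RCLike.star_def, RCLike.conj_ofReal]
  field_simp

lemma exists_mem_orthogonal_of_card_lt_finrank [Fintype ι] (w : ι → m → 𝕜)
    {K : Submodule 𝕜 (m → 𝕜)} (hK : Fintype.card ι < Module.finrank 𝕜 K) :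
    ∃ y ∈ K, star y ⬝ᵥ y = 1 ∧ ∀ p, star (w p) ⬝ᵥ y = 0 := by
  let φ := (of fun p => star (w p)).mulVecLin ∘ₗ K.subtype
  obtain ⟨x, hx, hx0⟩ := Submodule.exists_mem_ne_zero_of_ne_bot
    (LinearMap.ker_ne_bot_of_finrank_lt (f := φ) (by simpa using hK))
  obtain ⟨c, hc⟩ := exists_smul_star_dotProduct_self_eq_one (x := (x : m → 𝕜)) (by simpa using hx0)
  refine ⟨c • x, K.smul_mem c x.2, hc, fun p => ?_⟩
  rw [dotProduct_smul, show star (w p) ⬝ᵥ (x : m → 𝕜) = 0 from congrFun hx p, smul_zero]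

theorem exists_orthonormal_forall_mem {r : ℕ} (K : Fin r → Submodule 𝕜 (m → 𝕜))
    (hK : ∀ p : Fin r, p.val + 1 ≤ Module.finrank 𝕜 (K p)) :
    ∃ w : Fin r → m → 𝕜,
      (∀ p q, star (w p) ⬝ᵥ w q = if p = q then 1 else 0) ∧ ∀ p, w p ∈ K p := by
  induction r with
  | zero => exact ⟨Fin.elim0, fun p => p.elim0, fun p => p.elim0⟩
  | succ r ih =>
    obtain ⟨w, hw, hwK⟩ := ih (fun p => K p.castSucc) fun p => hK p.castSucc
    obtain ⟨y, hyK, hyy, hwy⟩ := exists_mem_orthogonal_of_card_lt_finrank w (K := K (Fin.last r))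
      (by simpa using hK (Fin.last r))
    have hyw : ∀ p, star y ⬝ᵥ w p = 0 := fun p => by rw [star_dotProduct, hwy, star_zero]
    refine ⟨Fin.snoc w y, fun p q => ?_,
      Fin.lastCases (by simpa using hyK) fun p => by simpa using hwK p⟩
    induction p using Fin.lastCases <;> induction q using Fin.lastCases <;>
      simp [hyy, hyw, hwy, hw, Fin.castSucc_ne_last, (Fin.castSucc_ne_last _).symm]

theorem prod_le_re_det_compression_of_mem_flag {κ : Type*} [LinearOrder κ] [Fintype κ]
    [LinearOrder ι] [Fintype ι] [LocallyFiniteOrderBot ι]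
    {A : Matrix m m 𝕜} (hA : A.PosSemidef) {v : κ → m → 𝕜} {α : κ → ℝ} (hα : Antitone α)
    (hα0 : ∀ k, 0 ≤ α k) (hv : ∀ p q, star (v p) ⬝ᵥ v q = if p = q then 1 else 0)
    (heig : ∀ k, A *ᵥ v k = (α k : 𝕜) • v k) {i : ι → κ} (hi : Monotone i) {w : ι → m → 𝕜}
    (hw : ∀ p q, star (w p) ⬝ᵥ w q = if p = q then 1 else 0)
    (hwF : ∀ p, w p ∈ Submodule.span 𝕜 {x | ∃ j, j ≤ i p ∧ x = v j}) :
    ∏ p, α (i p) ≤ RCLike.re (compression A w).det := by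
  refine prod_le_re_det_of_posSemidef ?_ (fun p => hα0 (i p)) fun p z hz => ?_
  · rw [compression_eq_conjTranspose_mul_mul]
    exact hA.conjTranspose_mul_mul_same _
  have hy : (of w)ᵀ *ᵥ z ∈ Submodule.span 𝕜 {x | ∃ j, j ≤ i p ∧ x = v j} := by
    rw [mulVec_transpose, vecMul_eq_sum]
    refine Submodule.sum_mem _ fun q _ => ?_
    rcases le_or_gt q p with hqp | hpq
    · refine Submodule.smul_mem _ _ (Submodule.span_mono ?_ (hwF q))
      exact fun x ⟨j, hj, hx⟩ => ⟨j, hj.trans (hi hqp), hx⟩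
    · simp [hz q hpq]
  rw [star_dotProduct_compression_mulVec, ← star_mulVec_dotProduct_mulVec_of_orthonormal hw]
  exact mul_re_le_of_mem_span_eigenvectors hα hv heig hy

end Compression

end Matrix

theorem determinant_compression_bound_general {n r : ℕ}
    (A : Matrix (Fin n) (Fin n) ℂ) (hPSD : A.PosSemidef)
    (α : Fin n → ℝ) (hαmono : Antitone α) (hα0 : ∀ k, 0 ≤ α k)
    (v : Fin n → (Fin n → ℂ))
    (hv : ∀ p q, star (v p) ⬝ᵥ v q = if p = q then 1 else 0)
    (heig : ∀ k, A.mulVec (v k) = (α k : ℂ) • v k)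
    (i : Fin r → Fin n) (hi : StrictMono i)
    (L : Submodule ℂ (Fin n → ℂ))
    (hSch : ∀ p : Fin r, p.val + 1 ≤
      Module.finrank ℂ ↥(L ⊓ Submodule.span ℂ {x | ∃ j, j ≤ i p ∧ x = v j}))
    (u : Fin r → (Fin n → ℂ))
    (hu : ∀ p q, star (u p) ⬝ᵥ u q = if p = q then 1 else 0)
    (hspan : Submodule.span ℂ (Set.range u) = L) :
    ∏ p, α (i p) ≤
      (Matrix.det (Matrix.of fun p q : Fin r => star (u p) ⬝ᵥ A.mulVec (u q))).re ∧
    (Matrix.det (Matrix.of fun p q : Fin r =>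
        star (v (i p)) ⬝ᵥ A.mulVec (v (i q)))).re = ∏ p, α (i p) := by
  change ∏ p, α (i p) ≤ RCLike.re (compression A u).det ∧
    RCLike.re (compression A fun p => v (i p)).det = ∏ p, α (i p)
  constructor
  · obtain ⟨w, hw, hwLF⟩ := exists_orthonormal_forall_mem _ hSch
    rw [← det_compression_eq_of_mem_span A hu hw fun p => hspan ▸ (hwLF p).1]
    exact prod_le_re_det_compression_of_mem_flag hPSD hαmono hα0 hv heig hi.monotone hw
      fun p => (hwLF p).2
  · have hvi : ∀ p q, star (v (i p)) ⬝ᵥ v (i q) = if p = q then 1 else 0 := fun p q => by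
      simp [hv, hi.injective.eq_iff]
    rw [compression_eq_diagonal hvi fun p => heig (i p), det_diagonal, ← RCLike.ofReal_prod,
      RCLike.ofReal_re]

/-- Multiplicative determinant bound: for a positive semidefinite Hermitian
`A` with eigenvalues `α₁ ≥ … ≥ αₙ ≥ 0`, orthonormal eigenbasis `v`, flag
`F_k = span(v₁,…,v_k)`, and an `r`-dimensional subspace `L` with
`dim (L ⊓ F_{i_p}) ≥ p` for all `p`, one has
`det(⟨A u_i, u_j⟩) ≥ ∏_p α_{i_p}` for any orthonormal basis `u` of `L`, with
equality for `L = span(v_{i₁},…,v_{i_r})`. -/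
theorem determinant_compression_bound {n r : ℕ}
    (A : Matrix (Fin n) (Fin n) ℂ) (hA : A.IsHermitian) (hPSD : A.PosSemidef)
    (α : Fin n → ℝ) (hαmono : Antitone α) (hα0 : ∀ k, 0 ≤ α k)
    (v : Fin n → (Fin n → ℂ))
    (hv : ∀ p q, star (v p) ⬝ᵥ v q = if p = q then 1 else 0)
    (heig : ∀ k, A.mulVec (v k) = (α k : ℂ) • v k)
    (i : Fin r → Fin n) (hi : StrictMono i)
    (L : Submodule ℂ (Fin n → ℂ)) (hL : Module.finrank ℂ L = r)
    (hSch : ∀ p : Fin r, p.val + 1 ≤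
      Module.finrank ℂ ↥(L ⊓ Submodule.span ℂ {x | ∃ j, j ≤ i p ∧ x = v j}))
    (u : Fin r → (Fin n → ℂ))
    (hu : ∀ p q, star (u p) ⬝ᵥ u q = if p = q then 1 else 0)
    (huL : ∀ p, u p ∈ L)
    (hspan : Submodule.span ℂ (Set.range u) = L) :
    ∏ p, α (i p) ≤
      (Matrix.det (Matrix.of fun p q : Fin r => star (u p) ⬝ᵥ A.mulVec (u q))).re ∧
    (Matrix.det (Matrix.of fun p q : Fin r =>
        star (v (i p)) ⬝ᵥ A.mulVec (v (i q)))).re = ∏ p, α (i p) :=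
  determinant_compression_bound_general A hPSD α hαmono hα0 v hv heig i hi L hSch u hu hspan
end

section
/- (Multiplicativity of the determinant of compressions along a product) Let C = A·B be a product of n×n complex matrices, and let L, M be r-dimensional subspaces of ℂⁿ with B(M) ⊆ L. Then D_{C*C}(M) = D_{A*A}(L) · D_{B*B}(M), where D_{H}(V) denotes det(⟨H u_i, u_j⟩) for an orthonormal basis (u_i) of V. -/
/-! Write `U`, `W` for the matrices with columns `u p`, `w q`; each compression matrix is then
`Vᴴ H V`. As `B` maps the columns of `W` into the column space of `U`, `B W = U T` for a square
`T`, and `Uᴴ U = 1` gives `Wᴴ (AB)ᴴ(AB) W = Tᴴ (Uᴴ AᴴA U) T` and `Wᴴ BᴴB W = Tᴴ T`. Taking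
determinants, both sides equal `det (Uᴴ AᴴA U) · det Tᴴ · det T`. -/

open Matrix BigOperators

namespace Matrix

variable {R l m n ι κ : Type*}

theorem exists_mul_eq_of_mulVec_mem_span [CommSemiring R] [Fintype n] [Fintype ι]
    {B : Matrix m n R} {u : ι → m → R} {w : κ → n → R}
    (h : ∀ q, B *ᵥ w q ∈ Submodule.span R (Set.range u)) :
    ∃ T : Matrix ι κ R, B * (of w)ᵀ = (of u)ᵀ * T := by
  choose c hc using fun q => Submodule.mem_span_range_iff_exists_fun R |>.mp (h q)
  refine ⟨(of c)ᵀ, ?_⟩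
  ext i q
  calc (B * (of w)ᵀ) i q = (B *ᵥ w q) i := rfl
    _ = (∑ p, c q p • u p) i := by rw [hc q]
    _ = ((of u)ᵀ * (of c)ᵀ) i q := by simp [mul_apply, mul_comm]

section StarRing

variable [Semiring R] [StarRing R] [Fintype m]

theorem of_star_dotProduct_mulVec (H : Matrix m m R) (v : ι → m → R) :
    of (fun p q => star (v p) ⬝ᵥ H *ᵥ v q) = (of v)ᵀᴴ * H * (of v)ᵀ := by
  ext p q
  simp only [of_apply, mul_apply, conjTranspose_apply, transpose_apply, dotProduct, mulVec,
    Pi.star_apply, Finset.mul_sum, Finset.sum_mul, mul_assoc]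
  exact Finset.sum_comm

theorem conjTranspose_mul_self_eq_one_of_orthonormal [DecidableEq ι] {u : ι → m → R}
    (hu : ∀ p q, star (u p) ⬝ᵥ u q = if p = q then 1 else 0) :
    (of u)ᵀᴴ * (of u)ᵀ = 1 := by
  ext p q
  simpa [mul_apply, dotProduct, one_apply] using hu p q

theorem conjTranspose_mul_mul_mul [Fintype n] (X : Matrix m n R) (W : Matrix n ι R) :
    Wᴴ * (Xᴴ * X) * W = (X * W)ᴴ * (X * W) := by
  simp only [conjTranspose_mul, Matrix.mul_assoc]

end StarRing

theorem det_compression_mul_of_mul_eq [CommRing R] [StarRing R] [Fintype l] [Fintype m]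
    [Fintype n] [Fintype ι] [DecidableEq ι] {A : Matrix l m R} {B : Matrix m n R}
    {U : Matrix m ι R} {W : Matrix n ι R} {T : Matrix ι ι R}
    (hU : Uᴴ * U = 1) (hBW : B * W = U * T) :
    det (Wᴴ * ((A * B)ᴴ * (A * B)) * W) =
      det (Uᴴ * (Aᴴ * A) * U) * det (Wᴴ * (Bᴴ * B) * W) := by
  have hAB : Wᴴ * ((A * B)ᴴ * (A * B)) * W = Tᴴ * (Uᴴ * (Aᴴ * A) * U) * T := by
    rw [conjTranspose_mul_mul_mul, conjTranspose_mul_mul_mul, Matrix.mul_assoc A, hBW]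
    simp only [conjTranspose_mul, Matrix.mul_assoc]
  have hB : Wᴴ * (Bᴴ * B) * W = Tᴴ * T := by
    rw [conjTranspose_mul_mul_mul, hBW, conjTranspose_mul, Matrix.mul_assoc,
      ← Matrix.mul_assoc Uᴴ, hU, Matrix.one_mul]
  rw [hAB, hB, det_mul, det_mul, det_mul]
  ring

end Matrix

theorem det_compression_mul_general {n r : ℕ}
    (A B : Matrix (Fin n) (Fin n) ℂ)
    (u w : Fin r → (Fin n → ℂ))
    (hu : ∀ p q, star (u p) ⬝ᵥ u q = if p = q then 1 else 0)
    (hBM : ∀ p, B.mulVec (w p) ∈ Submodule.span ℂ (Set.range u)) :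
    Matrix.det (Matrix.of fun p q : Fin r =>
        star (w p) ⬝ᵥ ((A * B)ᴴ * (A * B)).mulVec (w q)) =
      Matrix.det (Matrix.of fun p q : Fin r =>
        star (u p) ⬝ᵥ (Aᴴ * A).mulVec (u q)) *
      Matrix.det (Matrix.of fun p q : Fin r =>
        star (w p) ⬝ᵥ (Bᴴ * B).mulVec (w q)) := by
  obtain ⟨T, hT⟩ := exists_mul_eq_of_mulVec_mem_span hBM
  simp only [of_star_dotProduct_mulVec]
  exact det_compression_mul_of_mul_eq (conjTranspose_mul_self_eq_one_of_orthonormal hu) hT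

/-- Multiplicativity of determinants of compressions along a product: if
`C = A * B` and `L`, `M` are `r`-dimensional subspaces (given by orthonormal
bases `u` and `w`) with `B(M) ⊆ L`, then
`D_{CᴴC}(M) = D_{AᴴA}(L) · D_{BᴴB}(M)`, where `D_H(V) = det(⟨H u_i, u_j⟩)`
for an orthonormal basis `(u_i)` of `V`. -/
theorem det_compression_mul {n r : ℕ}
    (A B : Matrix (Fin n) (Fin n) ℂ)
    (u w : Fin r → (Fin n → ℂ))
    (hu : ∀ p q, star (u p) ⬝ᵥ u q = if p = q then 1 else 0)
    (hw : ∀ p q, star (w p) ⬝ᵥ w q = if p = q then 1 else 0)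
    (hBM : ∀ p, B.mulVec (w p) ∈ Submodule.span ℂ (Set.range u)) :
    Matrix.det (Matrix.of fun p q : Fin r =>
        star (w p) ⬝ᵥ ((A * B)ᴴ * (A * B)).mulVec (w q)) =
      Matrix.det (Matrix.of fun p q : Fin r =>
        star (u p) ⬝ᵥ (Aᴴ * A).mulVec (u q)) *
      Matrix.det (Matrix.of fun p q : Fin r =>
        star (w p) ⬝ᵥ (Bᴴ * B).mulVec (w q)) :=
  det_compression_mul_general A B u w hu hBM
end
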